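/- arXiv:1603.03811 — 9 statements merged into one kernel-verified Lean document; each statement's English description precedes it below -/
import Mathlib

section
/- An integer-valued random variable ξ satisfies max_{x∈ℤ} P(ξ = x) ≤ 1/2 if and only if its distribution is a countable mixture of unbiased Bernoulli measures, i.e., it can be written as (1/2)·Σᵢ tᵢ(δ_{aᵢ} + δ_{bᵢ}) where tᵢ ≥ 0, Σᵢ tᵢ = 1, and aᵢ ≠ bᵢ are integers for each i. -/
/-!
Enumerate the atoms and lay them out as consecutive intervals `cell p n` of length `p n` tiling
`[0, 1)`. For `U` uniform on `[0, 1/2)`, let `X` and `Y` be the indices of the cells containing `U`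
and `U + 1/2`, so that `halfShiftCoupling p (n, m)` is half the probability of `(X, Y) = (n, m)`.
Since `U` and `U + 1/2` together are uniform on `[0, 1)`, the law of `X` plus the
law of `Y` is `2 p`, so `p` is the average over `(X, Y)` of `½ (δ_X + δ_Y)`. A cell of length at
most `1/2` never contains both `U` and `U + 1/2`, so `X ≠ Y` almost surely. Conversely, every atom
of such a mixture is at most `∑ tᵢ / 2`.
-/

open MeasureTheory Set Function

theorem hasSum_measureReal_iUnion {α ι : Type*} [MeasurableSpace α] [Countable ι]
    {μ : Measure α} {s : ι → Set α} (hs : ∀ i, MeasurableSet (s i))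
    (hd : Pairwise (Disjoint on s)) (hfin : μ (⋃ i, s i) ≠ ⊤) :
    HasSum (fun i => μ.real (s i)) (μ.real (⋃ i, s i)) := by
  rw [measure_iUnion hd hs] at hfin
  simp only [measureReal_def, measure_iUnion hd hs,
    ENNReal.tsum_toReal_eq (ENNReal.ne_top_of_tsum_ne_top hfin)]
  exact ENNReal.hasSum_toReal hfin

section FiberSums

variable {α β M : Type*} [AddCommMonoid M] [TopologicalSpace M] {f : α × β → M} {s : M}

theorem hasSum_ite_eq_fst [DecidableEq α] (a : α) (h : HasSum (fun b => f (a, b)) s) :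
    HasSum (fun x => if a = x.1 then f x else 0) s := by
  rw [← (Prod.mk_right_injective a).hasSum_iff]
  · simpa [comp_def] using h
  · rintro ⟨a', b⟩ hx
    exact if_neg fun h => hx ⟨b, by rw [h]⟩

theorem hasSum_ite_eq_snd [DecidableEq β] (b : β) (h : HasSum (fun a => f (a, b)) s) :
    HasSum (fun x => if b = x.2 then f x else 0) s := by
  rw [← (Prod.mk_left_injective b).hasSum_iff]
  · simpa [comp_def] using h
  · rintro ⟨a, b'⟩ hx
    exact if_neg fun h => hx ⟨a, by rw [h]⟩

end FiberSums

noncomputable def cumSum (p : ℕ → ℝ) (n : ℕ) : ℝ := ∑ k ∈ Finset.range n, p k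

def cell (p : ℕ → ℝ) (n : ℕ) : Set ℝ := Ico (cumSum p n) (cumSum p (n + 1))

def cellPair (p : ℕ → ℝ) (nm : ℕ × ℕ) : Set ℝ :=
  cell p nm.1 ∩ (· + 1 / 2) ⁻¹' cell p nm.2

noncomputable def halfShiftCoupling (p : ℕ → ℝ) (nm : ℕ × ℕ) : ℝ :=
  volume.real (cellPair p nm)

section HalfShiftCoupling

variable {p : ℕ → ℝ}

theorem cumSum_succ (n : ℕ) : cumSum p (n + 1) = cumSum p n + p n :=
  Finset.sum_range_succ p n

theorem cumSum_monotone (hp : ∀ n, 0 ≤ p n) : Monotone (cumSum p) :=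
  monotone_nat_of_le_succ fun n => by rw [cumSum_succ]; linarith [hp n]

theorem cumSum_mem_Icc (hp : ∀ n, 0 ≤ p n) (h : HasSum p 1) (n : ℕ) :
    cumSum p n ∈ Icc 0 1 :=
  ⟨Finset.sum_nonneg fun k _ => hp k, (cumSum_monotone hp).ge_of_tendsto h.tendsto_sum_nat n⟩

theorem volume_cell_ne_top (n : ℕ) : volume (cell p n) ≠ ⊤ := measure_Ico_lt_top.ne

theorem volume_real_cell (hp : ∀ n, 0 ≤ p n) (n : ℕ) : volume.real (cell p n) = p n := by
  rw [cell, Real.volume_real_Ico_of_le (cumSum_monotone hp n.le_succ), cumSum_succ]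
  ring

theorem pairwise_disjoint_cell (hp : ∀ n, 0 ≤ p n) : Pairwise (Disjoint on cell p) :=
  (cumSum_monotone hp).pairwise_disjoint_on_Ico_succ

theorem cell_subset_Ico (hp : ∀ n, 0 ≤ p n) (h : HasSum p 1) (n : ℕ) : cell p n ⊆ Ico 0 1 :=
  Ico_subset_Ico (cumSum_mem_Icc hp h n).1 (cumSum_mem_Icc hp h (n + 1)).2

theorem iUnion_cell (hp : ∀ n, 0 ≤ p n) (h : HasSum p 1) : ⋃ n, cell p n = Ico 0 1 := by
  refine (iUnion_subset (cell_subset_Ico hp h)).antisymm fun y hy => ?_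
  have hex : ∃ n, y < cumSum p n := (h.tendsto_sum_nat.eventually (lt_mem_nhds hy.2)).exists
  obtain ⟨n, hn⟩ : ∃ n, Nat.find hex = n + 1 := Nat.exists_eq_succ_of_ne_zero fun h0 => by
    have := Nat.find_spec hex
    rw [h0, cumSum, Finset.sum_range_zero] at this
    exact this.not_ge hy.1
  exact mem_iUnion.2 ⟨n, not_lt.1 (Nat.find_min hex (by omega)), hn ▸ Nat.find_spec hex⟩

theorem measurableSet_cellPair (nm : ℕ × ℕ) : MeasurableSet (cellPair p nm) :=
  measurableSet_Ico.inter (measurable_add_const _ measurableSet_Ico)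

theorem hasSum_halfShiftCoupling_fst (hp : ∀ n, 0 ≤ p n) (h : HasSum p 1) (n : ℕ) :
    HasSum (fun m => halfShiftCoupling p (n, m)) (volume.real (cell p n ∩ Iio (1 / 2))) := by
  have hd : Pairwise (Disjoint on fun m => cellPair p (n, m)) :=
    fun i j hij => ((pairwise_disjoint_cell hp hij).preimage _).mono inf_le_right inf_le_right
  have hfin : volume (⋃ m, cellPair p (n, m)) ≠ ⊤ :=
    ne_top_of_le_ne_top (volume_cell_ne_top n)
      (measure_mono (iUnion_subset fun m => inter_subset_left))
  have hunion : ⋃ m, cellPair p (n, m) = cell p n ∩ Iio (1 / 2) := by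
    simp only [cellPair]
    rw [← inter_iUnion, ← preimage_iUnion, iUnion_cell hp h]
    ext y
    have := @cell_subset_Ico _ hp h n y
    simp only [mem_inter_iff, mem_Iio, mem_preimage, mem_Ico] at this ⊢
    constructor <;> rintro ⟨hy, _⟩ <;> refine ⟨hy, ?_⟩ <;> grind
  have := hasSum_measureReal_iUnion (fun m => measurableSet_cellPair (n, m)) hd hfin
  rwa [hunion] at this

theorem hasSum_halfShiftCoupling_snd (hp : ∀ n, 0 ≤ p n) (h : HasSum p 1) (m : ℕ) :
    HasSum (fun n => halfShiftCoupling p (n, m)) (volume.real (cell p m \ Iio (1 / 2))) := by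
  have hd : Pairwise (Disjoint on fun n => cellPair p (n, m)) :=
    fun i j hij => (pairwise_disjoint_cell hp hij).mono inf_le_left inf_le_left
  have hfin : volume (⋃ n, cellPair p (n, m)) ≠ ⊤ :=
    ne_top_of_le_ne_top (volume_cell_ne_top m)
      ((measure_mono (iUnion_subset fun n => inter_subset_right)).trans_eq
        (measure_preimage_add_right _ _ _))
  have hshift : (· + 1 / 2) ⁻¹' (cell p m \ Iio (1 / 2)) =
      ⋃ n, cellPair p (n, m) := by
    simp only [cellPair]
    rw [← iUnion_inter, iUnion_cell hp h]
    ext y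
    have := @cell_subset_Ico _ hp h m (y + 1 / 2)
    simp only [mem_inter_iff, mem_Iio, mem_preimage, mem_Ico, mem_sdiff, not_lt] at this ⊢
    constructor <;> rintro ⟨h1, h2⟩ <;> grind
  have := hasSum_measureReal_iUnion (fun n => measurableSet_cellPair (n, m)) hd hfin
  rwa [← hshift, measureReal_def, measure_preimage_add_right, ← measureReal_def] at this

theorem halfShiftCoupling_diag {n : ℕ} (hn : p n ≤ 1 / 2) :
    halfShiftCoupling p (n, n) = 0 := by
  have hempty : cellPair p (n, n) = ∅ := by
    ext y
    simp only [cellPair, cell, cumSum_succ, mem_inter_iff, mem_preimage, mem_Ico,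
      mem_empty_iff_false, iff_false]
    intro ⟨⟨h1, _⟩, ⟨_, h2⟩⟩
    linarith
  rw [halfShiftCoupling, hempty, measureReal_empty]

theorem hasSum_halfShiftCoupling (hp : ∀ n, 0 ≤ p n) (h : HasSum p 1) :
    HasSum (halfShiftCoupling p) (1 / 2) := by
  have hd : Pairwise (Disjoint on cellPair p) := by
    rintro ⟨n, m⟩ ⟨n', m'⟩ hnm
    show Disjoint (cell p n ∩ _) (cell p n' ∩ _)
    by_cases hn : n = n'
    · have hm : m ≠ m' := fun hm => hnm (by rw [hn, hm])
      exact ((pairwise_disjoint_cell hp hm).preimage _).mono inf_le_right inf_le_right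
    · exact (pairwise_disjoint_cell hp hn).mono inf_le_left inf_le_left
  have hunion : ⋃ nm, cellPair p nm = Ico 0 (1 / 2) := by
    simp only [cellPair, iUnion_prod', ← iUnion_inter_iUnion, ← preimage_iUnion,
      iUnion_cell hp h]
    ext y
    simp only [mem_inter_iff, mem_preimage, mem_Ico]
    constructor <;> intro hy <;> grind
  have hfin : volume (⋃ nm, cellPair p nm) ≠ ⊤ := by
    rw [hunion]; exact measure_Ico_lt_top.ne
  have := hasSum_measureReal_iUnion measurableSet_cellPair hd hfin
  rwa [hunion, Real.volume_real_Ico_of_le (by norm_num : (0 : ℝ) ≤ 1 / 2), sub_zero] at this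

theorem hasSum_halfShiftCoupling_mul_ite (hp : ∀ n, 0 ≤ p n) (h : HasSum p 1) (k : ℕ) :
    HasSum (fun nm => halfShiftCoupling p nm *
      ((if k = nm.1 then 1 else 0) + (if k = nm.2 then 1 else 0))) (p k) := by
  have := (hasSum_ite_eq_fst k (hasSum_halfShiftCoupling_fst hp h k)).add
    (hasSum_ite_eq_snd k (hasSum_halfShiftCoupling_snd hp h k))
  rw [measureReal_inter_add_sdiff measurableSet_Iio (volume_cell_ne_top k),
    volume_real_cell hp] at this
  simpa only [mul_add, mul_ite, mul_one, mul_zero] using this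

end HalfShiftCoupling

theorem exists_bernoulliMixture_of_le_half {α : Type*} [Denumerable α] [DecidableEq α]
    {p : α → ℝ} (hp : ∀ x, 0 ≤ p x) (h : HasSum p 1) (hhalf : ∀ x, p x ≤ 1 / 2) :
    ∃ (t : ℕ → ℝ) (a b : ℕ → α),
      (∀ i, 0 ≤ t i) ∧ (∑' i, t i) = 1 ∧ (∀ i, a i ≠ b i) ∧
      ∀ x, p x = (1/2) * ∑' i, t i *
        ((if x = a i then (1:ℝ) else 0) + (if x = b i then 1 else 0)) := by
  set e : ℕ ≃ α := (Denumerable.eqv α).symm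
  set c : ℕ ≃ ℕ × ℕ := (Denumerable.eqv (ℕ × ℕ)).symm
  set q := p ∘ e
  have hq : ∀ n, 0 ≤ q n := fun n => hp (e n)
  have hqsum : HasSum q 1 := e.hasSum_iff.2 h
  -- the coupling vanishes on the diagonal, where the second atom need only differ from the first
  let partner (nm : ℕ × ℕ) : ℕ := if nm.1 = nm.2 then nm.1 + 1 else nm.2
  refine ⟨fun i => 2 * halfShiftCoupling q (c i), fun i => e (c i).1, fun i => e (partner (c i)),
    fun i => mul_nonneg zero_le_two measureReal_nonneg, ?_, fun i => ?_, fun x => ?_⟩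
  · have := c.hasSum_iff.2 ((hasSum_halfShiftCoupling hq hqsum).mul_left 2)
    convert this.tsum_eq using 1 <;> norm_num
  · refine e.injective.ne ?_
    simp only [partner]
    split_ifs <;> omega
  · obtain ⟨k, rfl⟩ := e.surjective x
    have hterm : ∀ nm : ℕ × ℕ, 2 * halfShiftCoupling q nm *
        ((if e k = e nm.1 then (1:ℝ) else 0) + (if e k = e (partner nm) then 1 else 0)) =
        2 * (halfShiftCoupling q nm *
          ((if k = nm.1 then 1 else 0) + (if k = nm.2 then 1 else 0))) := by
      rintro ⟨n, m⟩
      by_cases hnm : n = m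
      · subst hnm
        simp [halfShiftCoupling_diag (p := q) (hhalf (e n))]
      · simp [partner, hnm, e.apply_eq_iff_eq, mul_assoc]
    have := c.hasSum_iff.2 ((hasSum_halfShiftCoupling_mul_ite hq hqsum k).mul_left 2)
    simp only [comp_def, ← hterm] at this
    rw [this.tsum_eq]
    simp [q]

theorem le_half_of_bernoulliMixture {α ι : Type*} [DecidableEq α] {t : ι → ℝ}
    {a b : ι → α} (ht : ∀ i, 0 ≤ t i) (htsum : ∑' i, t i = 1) (hab : ∀ i, a i ≠ b i)
    (x : α) :
    (1/2) * ∑' i, t i * ((if x = a i then (1:ℝ) else 0) + (if x = b i then 1 else 0)) ≤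
      1 / 2 := by
  have hsummable : Summable t := by
    by_contra hns
    rw [tsum_eq_zero_of_not_summable hns] at htsum
    exact zero_ne_one htsum
  have hle : ∀ i,
      t i * ((if x = a i then (1:ℝ) else 0) + (if x = b i then 1 else 0)) ≤ t i := by
    intro i
    refine mul_le_of_le_one_right (ht i) ?_
    split_ifs with hxa hxb
    · exact absurd (hxa.symm.trans hxb) (hab i)
    all_goals norm_num
  have hnonneg : ∀ i,
      0 ≤ t i * ((if x = a i then (1:ℝ) else 0) + (if x = b i then 1 else 0)) :=
    fun i => mul_nonneg (ht i) (by positivity)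
  have := (hsummable.of_nonneg_of_le hnonneg hle).tsum_le_tsum hle hsummable
  rw [htsum] at this
  linarith

/-- An integer-valued distribution has all atoms at most 1/2 iff it is a countable
mixture of unbiased Bernoulli measures. -/
theorem stmt1 (p : ℤ → ℝ) (hp : ∀ x, 0 ≤ p x) (hsummable : Summable p)
    (hsum : ∑' x, p x = 1) :
    (∀ x, p x ≤ 1 / 2) ↔
    ∃ (t : ℕ → ℝ) (a b : ℕ → ℤ),
      (∀ i, 0 ≤ t i) ∧ (∑' i, t i) = 1 ∧ (∀ i, a i ≠ b i) ∧
      ∀ x, p x = (1/2) * ∑' i, t i *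
        ((if x = a i then (1:ℝ) else 0) + (if x = b i then 1 else 0)) := by
  refine ⟨exists_bernoulliMixture_of_le_half hp (hsum ▸ hsummable.hasSum), ?_⟩
  rintro ⟨t, a, b, ht, htsum, hab, hrep⟩ x
  exact (hrep x).trans_le (le_half_of_bernoulliMixture ht htsum hab x)
end

section
/- Let μ be a finite non-negative measure on ℤ whose largest atom is at most μ(ℤ)/2, and let k ≥ 4. Then μ can be written as μ = ν + β where β is either the null measure or a positive multiple of a Bernoulli measure (i.e., β = w(δ_a + δ_b) for some w > 0 and distinct integers a, b), ν is a finite non-negative measure whose largest atom is at most ν(ℤ)/2, and ν assigns zero mass to the k-th largest atom of μ. -/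
/-- A finite nonnegative measure on ℤ with largest atom at most half the total mass can be
decomposed as ν + β where β is null or a positive multiple of a Bernoulli measure,
ν again has largest atom at most half its mass, and ν vanishes at the k-th largest atom. -/
theorem stmt2 (μ : ℤ → ℝ) (hμ0 : ∀ x, 0 ≤ μ x) (hμsum : Summable μ)
    (hμatom : ∀ x, μ x ≤ (∑' x, μ x) / 2)
    (π : ℕ → ℤ) (hπbij : Function.Bijective π)
    (hπmono : ∀ i j : ℕ, i < j → μ (π j) ≤ μ (π i))
    (hπties : ∀ i j : ℕ, i < j → μ (π i) = μ (π j) → π i < π j)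
    (k : ℕ) (hk : 4 ≤ k) :
    ∃ ν β : ℤ → ℝ,
      (∀ x, μ x = ν x + β x) ∧
      (β = 0 ∨ ∃ (w : ℝ) (a b : ℤ), 0 < w ∧ a ≠ b ∧
        β = fun x => w * ((if x = a then (1:ℝ) else 0) + (if x = b then 1 else 0))) ∧
      (∀ x, 0 ≤ ν x) ∧ Summable ν ∧
      (∀ x, ν x ≤ (∑' x, ν x) / 2) ∧
      ν (π k) = 0 := by
  by_cases hw : μ (π k) = 0
  · exact ⟨μ, 0, fun x => by simp, Or.inl rfl, hμ0, hμsum, hμatom, hw⟩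
  set S := ∑' x, μ x with hS
  set w := μ (π k) with hwdef
  have hwpos : 0 < w := lt_of_le_of_ne (hμ0 _) (Ne.symm hw)
  set a := π k with ha
  set b := π 0 with hb
  have hab : a ≠ b := by
    intro h
    have := hπbij.injective h
    omega
  set β : ℤ → ℝ := fun x => w * ((if x = a then (1:ℝ) else 0) + (if x = b then 1 else 0)) with hβ
  set ν : ℤ → ℝ := fun x => μ x - β x with hν
  -- β as a sum of two ite functions
  have hβ' : β = (fun x => if x = a then w else 0) + fun x => if x = b then w else 0 := by
    funext x
    simp only [hβ, Pi.add_apply]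
    split_ifs <;> ring
  have hs1 : Summable (fun x : ℤ => if x = a then w else 0) := by
    apply summable_of_ne_finset_zero (s := {a})
    intro x hx
    simp at hx
    simp [hx]
  have hs2 : Summable (fun x : ℤ => if x = b then w else 0) := by
    apply summable_of_ne_finset_zero (s := {b})
    intro x hx
    simp at hx
    simp [hx]
  have hβsum : Summable β := by rw [hβ']; exact hs1.add hs2
  have hβtsum : ∑' x, β x = 2 * w := by
    rw [hβ']
    simp only [Pi.add_apply]
    rw [Summable.tsum_add hs1 hs2, tsum_ite_eq, tsum_ite_eq]; ring
  have hνsum : Summable ν := hμsum.sub hβsum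
  have hνtsum : ∑' x, ν x = S - 2 * w := by
    rw [hν]
    rw [Summable.tsum_sub hμsum hβsum, hβtsum]
  -- key: sum of 4 largest atoms ≤ S
  have hfsum : Summable (fun i => μ (π i)) := hμsum.comp_injective hπbij.injective
  have hftsum : ∑' i, μ (π i) = S := (Equiv.ofBijective π hπbij).tsum_eq μ
  have hsum4 : μ (π 0) + μ (π 1) + μ (π 2) + μ (π 3) ≤ S := by
    have h := Summable.sum_le_tsum ({0, 1, 2, 3} : Finset ℕ) (fun i _ => hμ0 (π i)) hfsum
    rw [hftsum] at h
    have he : ∑ i ∈ ({0, 1, 2, 3} : Finset ℕ), μ (π i)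
        = μ (π 0) + μ (π 1) + μ (π 2) + μ (π 3) := by
      simp [Finset.sum_insert, Finset.mem_insert]
      ring
    linarith [he ▸ h]
  have hw2 : w ≤ μ (π 2) := hπmono 2 k (by omega)
  have hw3 : w ≤ μ (π 3) := hπmono 3 k (by omega)
  have h01 : μ (π 1) ≤ μ (π 0) := hπmono 0 1 (by omega)
  have hkey : μ (π 1) + w ≤ S / 2 := by linarith
  have hνa : ν a = 0 := by
    simp only [hν, hβ]
    rw [if_neg hab]
    simp [← hwdef]
  have hwb : w ≤ μ b := hπmono 0 k (by omega)
  have hwhalf : w ≤ S / 2 := hμatom _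
  refine ⟨ν, β, fun x => by simp [hν], Or.inr ⟨w, a, b, hwpos, hab, rfl⟩, ?_, hνsum, ?_, hνa⟩
  · intro x
    by_cases hxa : x = a
    · rw [hxa, hνa]
    by_cases hxb : x = b
    · subst hxb
      simp only [hν, hβ]
      rw [if_neg hxa]
      norm_num
      linarith
    · simp only [hν, hβ]
      rw [if_neg hxa, if_neg hxb]
      have := hμ0 x
      simp
      linarith
  · intro x
    rw [hνtsum]
    by_cases hxa : x = a
    · rw [hxa, hνa]; linarith
    by_cases hxb : x = b
    · subst hxb
      simp only [hν, hβ]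
      rw [if_neg hxa]
      norm_num
      have := hμatom b
      linarith
    · have hx : ν x = μ x := by
        simp only [hν, hβ]
        rw [if_neg hxa, if_neg hxb]
        ring
      rw [hx]
      obtain ⟨j, rfl⟩ := hπbij.surjective x
      have hj0 : j ≠ 0 := by rintro rfl; exact hxb rfl
      have hμj : μ (π j) ≤ μ (π 1) := by
        rcases Nat.lt_or_ge 1 j with h | h
        · exact hπmono 1 j h
        · have hj1 : j = 1 := by omega
          rw [hj1]
      linarith
end

section
/- Let B₁, ..., B_n be i.i.d. Bernoulli(1/2) random variables taking values in {0,1}, and let (bᵢ) and (dᵢ) be integer sequences. Then for every integer m, P(Σᵢ (bᵢ + dᵢBᵢ) = m) ≤ 2^{−k}, where k = |{L(dᵢ) : 1 ≤ i ≤ n}| and L(d) denotes the exponent of the largest power of 2 dividing d (with the convention that this set only counts distinct finite values L(dᵢ) for dᵢ ≠ 0, treated appropriately). -/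
/-!
Keep one index for each 2-adic valuation occurring among the nonzero weights `d i`. The other
terms form an independent summand, and adding an independent variable never raises the largest
point probability. For the kept indices induct, peeling off the index `a` of least valuation `v`:
every other kept term is divisible by `2 ^ (v + 1)` and `d a` is not, so the target value
determines `B a`, which costs a factor `1 / 2`.
-/

open MeasureTheory ProbabilityTheory Finset

theorem Int.eq_ite_dvd_of_add_mul_eq {t r a x c : ℤ} (hr : t ∣ r) (ha : ¬ t ∣ a)
    (hx : x = 0 ∨ x = 1) (h : r + a * x = c) : x = if t ∣ c then 0 else 1 := by
  subst h
  rcases hx with rfl | rfl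
  · simp [hr]
  · simp [(dvd_add_right hr).not.mpr ha]

namespace ProbabilityTheory

variable {Ω : Type*} [MeasurableSpace Ω] {μ : Measure Ω}

theorem IndepFun.measure_add_eq_le {G : Type*} [AddGroup G] [MeasurableSpace G]
    [MeasurableAdd₂ G] [MeasurableSingletonClass G] [IsProbabilityMeasure μ] {X Y : Ω → G}
    (hX : Measurable X) (hY : Measurable Y) (hXY : IndepFun X Y μ) {p : ENNReal}
    (hp : ∀ c, μ {ω | Y ω = c} ≤ p) (m : G) :
    μ {ω | X ω + Y ω = m} ≤ p := by
  have hfiber : ∀ x : G, μ.map Y {y | x + y = m} ≤ p := fun x => by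
    have : {y | x + y = m} = {-x + m} := by ext; simp [eq_neg_add_iff_add_eq]
    rw [this, Measure.map_apply hY (measurableSet_singleton _)]
    exact hp (-x + m)
  calc μ {ω | X ω + Y ω = m}
      = (μ.map X ∗ μ.map Y) {m} := by
        rw [← hXY.map_add_eq_map_conv_map hX hY, Measure.map_apply (hX.add hY)
          (measurableSet_singleton m)]
        rfl
    _ = ∫⁻ x, μ.map Y {y | x + y = m} ∂μ.map X := by
        rw [Measure.conv, Measure.map_apply measurable_add (measurableSet_singleton m),
          Measure.prod_apply (measurable_add (measurableSet_singleton m))]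
        rfl
    _ ≤ ∫⁻ _, p ∂μ.map X := lintegral_mono hfiber
    _ = p := by simp [Measure.map_apply hX MeasurableSet.univ]

theorem ae_eq_or_eq_of_measure_add_measure_eq_one {α : Type*} [MeasurableSpace α]
    [MeasurableSingletonClass α] [IsProbabilityMeasure μ] {X : Ω → α} (hX : Measurable X)
    {a b : α} (hab : a ≠ b) (h : μ {ω | X ω = a} + μ {ω | X ω = b} = 1) :
    ∀ᵐ ω ∂μ, X ω = a ∨ X ω = b := by
  have hmeas : ∀ c, MeasurableSet {ω | X ω = c} := fun c => hX (measurableSet_singleton c)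
  have hdisj : Disjoint {ω | X ω = a} {ω | X ω = b} :=
    Set.disjoint_left.mpr fun ω ha hb => hab (ha.symm.trans hb)
  rw [← measure_union hdisj (hmeas b), ← prob_compl_eq_zero_iff ((hmeas a).union (hmeas b))] at h
  exact measure_eq_zero_iff_ae_notMem.mp h |>.mono fun ω hω => by
    simpa [or_iff_not_imp_left] using hω

theorem measure_add_mul_eq_le [IsProbabilityMeasure μ] {R X : Ω → ℤ} {t a : ℤ}
    (hX : Measurable X) (hind : IndepFun R (fun ω => a * X ω) μ)
    (hRt : ∀ᵐ ω ∂μ, t ∣ R ω) (ha : ¬ t ∣ a)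
    (hXhalf : μ {ω | X ω = 0} = 1 / 2 ∧ μ {ω | X ω = 1} = 1 / 2)
    {p : ENNReal} (hp : ∀ c, μ {ω | R ω = c} ≤ p) (c : ℤ) :
    μ {ω | R ω + a * X ω = c} ≤ p * (1 / 2) := by
  have ha0 : a ≠ 0 := by rintro rfl; exact ha (dvd_zero t)
  set x : ℤ := if t ∣ c then 0 else 1
  have hX01 : ∀ᵐ ω ∂μ, X ω = 0 ∨ X ω = 1 :=
    ae_eq_or_eq_of_measure_add_measure_eq_one hX zero_ne_one
      (by rw [hXhalf.1, hXhalf.2, ENNReal.add_halves])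
  have hsub : {ω | R ω + a * X ω = c} ≤ᵐ[μ]
      (R ⁻¹' {c - a * x} ∩ (fun ω => a * X ω) ⁻¹' {a * x} : Set Ω) := by
    filter_upwards [hRt, hX01] with ω hr hx hω
    have hxω : X ω = x := Int.eq_ite_dvd_of_add_mul_eq hr ha hx hω
    have hsum : R ω + a * X ω = c := hω
    exact ⟨show R ω = c - a * x by rw [← hsum, hxω]; ring, show a * X ω = a * x by rw [hxω]⟩
  have hXx : μ ((fun ω => a * X ω) ⁻¹' {a * x}) = 1 / 2 := by
    have : (fun ω => a * X ω) ⁻¹' {a * x} = {ω | X ω = x} := by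
      ext ω; simp [mul_right_inj' ha0]
    rw [this]
    unfold x; split_ifs
    exacts [hXhalf.1, hXhalf.2]
  calc μ {ω | R ω + a * X ω = c}
      ≤ μ (R ⁻¹' {c - a * x} ∩ (fun ω => a * X ω) ⁻¹' {a * x}) := measure_mono_ae hsub
    _ = μ {ω | R ω = c - a * x} * (1 / 2) := by
        rw [hind.measure_inter_preimage_eq_mul _ _ (measurableSet_singleton _)
          (measurableSet_singleton _), hXx]
        rfl
    _ ≤ p * (1 / 2) := by gcongr; exact hp _

theorem iIndepFun.indepFun_finsetSum_finsetSum {ι G : Type*} [AddCommMonoid G] [MeasurableSpace G]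
    [MeasurableAdd₂ G] {f : ι → Ω → G} (hf : iIndepFun f μ) (hmeas : ∀ i, Measurable (f i))
    {s t : Finset ι} (hst : Disjoint s t) :
    IndepFun (fun ω => ∑ i ∈ s, f i ω) (fun ω => ∑ i ∈ t, f i ω) μ := by
  have hsum : ∀ u : Finset ι, Measurable fun v : u → G => ∑ i, v i := fun u =>
    Finset.measurable_sum _ fun i _ => measurable_pi_apply i
  convert (hf.indepFun_finset s t hst hmeas).comp (hsum s) (hsum t) using 1 <;>
  · funext ω
    exact (Finset.sum_coe_sort _ fun i => f i ω).symm

theorem measure_sum_mul_eq_le_of_injOn {ι : Type*} [IsProbabilityMeasure μ] {B : ι → Ω → ℤ}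
    {d : ι → ℤ} (hmeas : ∀ i, Measurable (B i)) (hindep : iIndepFun B μ)
    (hB : ∀ i, μ {ω | B i ω = 0} = 1 / 2 ∧ μ {ω | B i ω = 1} = 1 / 2) {S : Finset ι}
    (hd : ∀ i ∈ S, d i ≠ 0) (hinj : Set.InjOn (fun i => padicValInt 2 (d i)) S) (c : ℤ) :
    μ {ω | ∑ i ∈ S, d i * B i ω = c} ≤ (1 / 2) ^ #S := by
  classical
  have hfmeas : ∀ i, Measurable fun ω => d i * B i ω := fun i => (hmeas i).const_mul (d i)
  have hfindep : iIndepFun (fun i ω => d i * B i ω) μ :=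
    hindep.comp (fun i x => d i * x) fun i => measurable_const_mul (d i)
  induction S using Finset.induction_on_min_value (fun i => padicValInt 2 (d i))
    generalizing c with
  | empty => simpa using prob_le_one
  | insert a s ha hmin ih =>
    set v := padicValInt 2 (d a)
    have hlt : ∀ j ∈ s, v < padicValInt 2 (d j) := fun j hj =>
      (hmin j hj).lt_of_ne fun h => ha (hinj (mem_insert_self a s) (mem_insert_of_mem hj) h ▸ hj)
    have hdvd : ∀ j ∈ s, (2 : ℤ) ^ (v + 1) ∣ d j := fun j hj =>
      (padicValInt_dvd_iff (p := 2) _ _).mpr (Or.inr (hlt j hj))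
    have hndvd : ¬ (2 : ℤ) ^ (v + 1) ∣ d a := fun h => by
      rcases (padicValInt_dvd_iff (p := 2) _ _).mp h with h0 | hle
      · exact hd a (mem_insert_self a s) h0
      · omega
    have hRt : ∀ᵐ ω ∂μ, (2 : ℤ) ^ (v + 1) ∣ ∑ j ∈ s, d j * B j ω := by
      have h01 : ∀ᵐ ω ∂μ, ∀ j ∈ s, B j ω = 0 ∨ B j ω = 1 :=
        (Filter.eventually_all_finset s).mpr fun j _ =>
          ae_eq_or_eq_of_measure_add_measure_eq_one (hmeas j) zero_ne_one
            (by rw [(hB j).1, (hB j).2, ENNReal.add_halves])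
      filter_upwards [h01] with ω hω
      refine Finset.dvd_sum fun j hj => ?_
      rcases hω j hj with h | h <;> simp [h, hdvd j hj]
    have hind : IndepFun (fun ω => ∑ j ∈ s, d j * B j ω) (fun ω => d a * B a ω) μ := by
      simpa only [Finset.sum_fn] using hfindep.indepFun_finsetSum_of_notMem hfmeas ha
    have hstep := measure_add_mul_eq_le (hmeas a) hind hRt hndvd (hB a)
      (ih (fun i hi => hd i (mem_insert_of_mem hi)) (hinj.mono (by simp))) c
    rw [card_insert_of_notMem ha, pow_succ]
    simpa only [sum_insert ha, add_comm] using hstep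

end ProbabilityTheory

/-- Anticoncentration for weighted sums of i.i.d. Bernoulli(1/2): the probability of any
value is at most 2^{-k} where k is the number of distinct 2-adic valuations among the
nonzero weights. -/
theorem stmt3 {Ω : Type*} [MeasureSpace Ω] [IsProbabilityMeasure (ℙ : Measure Ω)]
    (n : ℕ) (B : Fin n → Ω → ℤ) (b d : Fin n → ℤ)
    (hmeas : ∀ i, Measurable (B i))
    (hindep : iIndepFun B ℙ)
    (hB : ∀ i, ℙ {ω | B i ω = 0} = 1/2 ∧ ℙ {ω | B i ω = 1} = 1/2) :
    ∀ m : ℤ, ℙ {ω | ∑ i, (b i + d i * B i ω) = m} ≤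
      (1/2 : ENNReal) ^ ((Finset.univ.filter (fun i => d i ≠ 0)).image
        (fun i => padicValInt 2 (d i))).card := by
  intro m
  set T := univ.filter fun i => d i ≠ 0
  obtain ⟨S, hST, hinj, himg⟩ := exists_subset_injOn_image_eq_of_surjOn (T : Set (Fin n))
    (T.image fun i => padicValInt 2 (d i)) (by rw [coe_image]; exact Set.surjOn_image _ _)
  rw [← himg, card_image_of_injOn hinj]
  set f : Fin n → Ω → ℤ := fun i ω => d i * B i ω
  have hfmeas : ∀ i, Measurable (f i) := fun i => (hmeas i).const_mul (d i)
  have hfindep : iIndepFun f ℙ :=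
    hindep.comp (fun i x => d i * x) fun i => measurable_const_mul (d i)
  have hsplit : {ω | ∑ i, (b i + d i * B i ω) = m} =
      {ω | ∑ i ∈ Sᶜ, f i ω + ∑ i ∈ S, f i ω = m - ∑ i, b i} := by
    ext ω
    simp only [Set.mem_ofPred_eq, sum_add_distrib, ← sum_compl_add_sum S, f]
    omega
  rw [hsplit]
  refine IndepFun.measure_add_eq_le (Finset.measurable_sum _ fun i _ => hfmeas i)
    (Finset.measurable_sum _ fun i _ => hfmeas i)
    (hfindep.indepFun_finsetSum_finsetSum hfmeas disjoint_compl_left) (fun c => ?_) _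
  exact measure_sum_mul_eq_le_of_injOn hmeas hindep hB
    (fun i hi => (mem_filter.mp (hST hi)).2) hinj c
end

section
/- Let w₁, ..., w_n be i.i.d. non-negative integer-valued random variables, let α ∈ (0,1) with αn ∈ ℕ, and let W = |{i + wᵢ : 1 ≤ i ≤ n}|. Then P(W = αn) ≤ C(n, αn)·α^n ≤ (α/(1−α))^{n(1−α)}. -/
/-!
Reduce the positions `i + wᵢ` modulo `n`. If they take at most `k` distinct values, their residues
lie in some `k`-element set `S ⊆ ℤ/n`. For fixed `S`, independence turns the probability of this
into `∏ pᵢ` with `pᵢ = P(i + wᵢ mod n ∈ S)`; since the `wᵢ` share one law and `i ↦ i + x` permutes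
`ℤ/n`, `∑ pᵢ = k`, so AM-GM gives `∏ pᵢ ≤ (k/n)^n = α^n`. A union bound over the `C(n, k)` sets `S`
gives the first inequality; the second is the bound `C(n, k) αᵏ (1 - α)ⁿ⁻ᵏ ≤ 1` on a binomial term.
-/

open MeasureTheory ProbabilityTheory Finset
open scoped ENNReal

lemma card_filter_natCast_add_mem {n : ℕ} [NeZero n] (S : Finset (ZMod n)) (c : ZMod n) :
    #{i : Fin n | ((i : ℕ) : ZMod n) + c ∈ S} = #S := by
  refine card_nbij' (fun i => ((i : ℕ) : ZMod n) + c) (fun z => ⟨(z - c).val, ZMod.val_lt _⟩)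
    ?_ ?_ ?_ ?_
  · intro i hi
    simpa using hi
  · intro z hz
    simpa using hz
  · intro i _
    simp [ZMod.val_cast_of_lt i.isLt]
  · intro z _
    simp

def landingSet {n : ℕ} (S : Finset (ZMod n)) (i : Fin n) : Set ℕ :=
  {x | ((i + 1 + x : ℕ) : ZMod n) ∈ S}

lemma sum_indicator_landingSet {n : ℕ} [NeZero n] (S : Finset (ZMod n)) (x : ℕ) :
    ∑ i : Fin n, (landingSet S i).indicator (1 : ℕ → ℝ≥0∞) x = #S := by
  simp only [Set.indicator_apply, landingSet, Set.mem_ofPred_eq, Pi.one_apply, sum_boole]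
  rw [← card_filter_natCast_add_mem S ((1 + x : ℕ) : ZMod n)]
  push_cast
  simp only [add_assoc]

lemma prod_le_mean_pow {ι : Type*} [Fintype ι] [Nonempty ι] {q : ι → ℝ} (hq : ∀ i, 0 ≤ q i) :
    ∏ i, q i ≤ ((∑ i, q i) / Fintype.card ι) ^ Fintype.card ι := by
  set m := Fintype.card ι
  have hm : (0 : ℝ) < m := by exact_mod_cast Fintype.card_pos
  have amgm : ∏ i, q i ^ (m : ℝ)⁻¹ ≤ ∑ i, (m : ℝ)⁻¹ * q i :=
    Real.geom_mean_le_arith_mean_weighted univ _ q (fun _ _ => by positivity)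
      (by simp [m, hm.ne']) (fun i _ => hq i)
  calc ∏ i, q i = (∏ i, q i ^ (m : ℝ)⁻¹) ^ m := by
        rw [← prod_pow]
        refine prod_congr rfl fun i _ => ?_
        rw [← Real.rpow_natCast, ← Real.rpow_mul (hq i), inv_mul_cancel₀ hm.ne', Real.rpow_one]
    _ ≤ ((∑ i, q i) / m) ^ m := by
        gcongr
        · exact prod_nonneg fun i _ => Real.rpow_nonneg (hq i) _
        · rwa [← mul_sum, inv_mul_eq_div] at amgm

lemma choose_mul_pow_mul_one_sub_pow_le_one {p : ℝ} (hp0 : 0 ≤ p) (hp1 : p ≤ 1) {n k : ℕ}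
    (hk : k ≤ n) : n.choose k * (p ^ k * (1 - p) ^ (n - k)) ≤ 1 := by
  have hsum : ∑ j ∈ range (n + 1), p ^ j * (1 - p) ^ (n - j) * n.choose j = 1 := by
    rw [← add_pow, add_sub_cancel, one_pow]
  calc n.choose k * (p ^ k * (1 - p) ^ (n - k)) = p ^ k * (1 - p) ^ (n - k) * n.choose k := by
        ring
    _ ≤ 1 := hsum ▸ single_le_sum (f := fun j => p ^ j * (1 - p) ^ (n - j) * n.choose j)
        (fun j _ => by have := sub_nonneg.2 hp1; positivity) (mem_range_succ_iff.2 hk)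

lemma choose_mul_pow_le_div_one_sub_pow {p : ℝ} (hp0 : 0 ≤ p) (hp1 : p < 1) {n k : ℕ}
    (hk : k ≤ n) : n.choose k * p ^ n ≤ (p / (1 - p)) ^ (n - k) := by
  have hq : 0 < 1 - p := sub_pos.2 hp1
  rw [div_pow, le_div_iff₀ (by positivity)]
  calc n.choose k * p ^ n * (1 - p) ^ (n - k)
      = n.choose k * (p ^ k * (1 - p) ^ (n - k)) * p ^ (n - k) := by
        rw [← pow_mul_pow_sub p hk]
        ring
    _ ≤ 1 * p ^ (n - k) := by
        gcongr
        exact choose_mul_pow_mul_one_sub_pow_le_one hp0 hp1.le hk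
    _ = p ^ (n - k) := one_mul _

lemma setOf_card_image_le_subset_biUnion {Ω : Type*} {n : ℕ} [NeZero n] {w : Fin n → Ω → ℕ}
    {k : ℕ} (hk : k ≤ n) :
    {ω | #(univ.image fun i : Fin n => (i : ℕ) + 1 + w i ω) ≤ k} ⊆
      ⋃ S ∈ powersetCard k (univ : Finset (ZMod n)), ⋂ i, w i ⁻¹' landingSet S i := by
  intro ω hω
  set residues := (univ.image fun i : Fin n => (i : ℕ) + 1 + w i ω).image ((↑) : ℕ → ZMod n)
  obtain ⟨S, hresS, -, hS⟩ := exists_subsuperset_card_eq (subset_univ residues)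
    (card_image_le.trans hω) (by simpa using hk)
  refine Set.mem_biUnion (mem_powersetCard.2 ⟨subset_univ S, hS⟩) (Set.mem_iInter.2 fun i => ?_)
  exact hresS (mem_image_of_mem _ (mem_image_of_mem _ (mem_univ i)))

section Probability

variable {Ω : Type*} [MeasurableSpace Ω] {P : Measure Ω}

lemma sum_measure_preimage_eq_of_sum_indicator_eq {ι β : Type*} [Fintype ι] [MeasurableSpace β]
    {μ : Measure β} [IsProbabilityMeasure μ] {X : ι → Ω → β} (hX : ∀ i, Measurable (X i))
    (hlaw : ∀ i, P.map (X i) = μ) {B : ι → Set β} (hB : ∀ i, MeasurableSet (B i)) {c : ℝ≥0∞}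
    (hc : ∀ x, ∑ i, (B i).indicator 1 x = c) :
    ∑ i, P (X i ⁻¹' B i) = c :=
  calc ∑ i, P (X i ⁻¹' B i) = ∑ i, ∫⁻ x, (B i).indicator 1 x ∂μ := by
        refine sum_congr rfl fun i _ => ?_
        rw [lintegral_indicator_one (hB i), ← hlaw i, Measure.map_apply (hX i) (hB i)]
    _ = ∫⁻ x, ∑ i, (B i).indicator 1 x ∂μ :=
        (lintegral_finsetSum _ fun i _ => measurable_const.indicator (hB i)).symm
    _ = c := by simp [hc]

variable [IsProbabilityMeasure P] {n : ℕ} [NeZero n] {w : Fin n → Ω → ℕ}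

lemma sum_measure_preimage_landingSet (hmeas : ∀ i, Measurable (w i))
    (hident : ∀ i j, P.map (w i) = P.map (w j)) (S : Finset (ZMod n)) :
    ∑ i, P (w i ⁻¹' landingSet S i) = #S :=
  have : IsProbabilityMeasure (P.map (w 0)) :=
    Measure.isProbabilityMeasure_map (hmeas 0).aemeasurable
  sum_measure_preimage_eq_of_sum_indicator_eq hmeas (fun i => hident i 0)
    (fun _ => .of_discrete) (sum_indicator_landingSet S)

lemma measureReal_iInter_preimage_landingSet_le (hmeas : ∀ i, Measurable (w i))
    (hindep : iIndepFun w P) (hident : ∀ i j, P.map (w i) = P.map (w j)) (S : Finset (ZMod n)) :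
    P.real (⋂ i, w i ⁻¹' landingSet S i) ≤ (#S / n : ℝ) ^ n := by
  have hprod : P.real (⋂ i, w i ⁻¹' landingSet S i) = ∏ i, P.real (w i ⁻¹' landingSet S i) := by
    rw [measureReal_def, hindep.meas_iInter fun i => ⟨_, .of_discrete, rfl⟩, ENNReal.toReal_prod]
    rfl
  have hsum : ∑ i, P.real (w i ⁻¹' landingSet S i) = #S := by
    simp only [measureReal_def]
    rw [← ENNReal.toReal_sum fun i _ => measure_ne_top _ _,
      sum_measure_preimage_landingSet hmeas hident S, ENNReal.toReal_natCast]
  simpa [hprod, hsum] using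
    prod_le_mean_pow (q := fun i => P.real (w i ⁻¹' landingSet S i)) fun i => measureReal_nonneg

lemma measureReal_setOf_card_image_le_le (hmeas : ∀ i, Measurable (w i)) (hindep : iIndepFun w P)
    (hident : ∀ i j, P.map (w i) = P.map (w j)) {k : ℕ} (hk : k ≤ n) :
    P.real {ω | #(univ.image fun i : Fin n => (i : ℕ) + 1 + w i ω) ≤ k} ≤
      n.choose k * (k / n : ℝ) ^ n :=
  calc _ ≤ ∑ S ∈ powersetCard k (univ : Finset (ZMod n)), P.real (⋂ i, w i ⁻¹' landingSet S i) :=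
        (measureReal_mono (setOf_card_image_le_subset_biUnion hk) (measure_ne_top _ _)).trans
          (measureReal_biUnion_finset_le _ _)
    _ ≤ ∑ S ∈ powersetCard k (univ : Finset (ZMod n)), (k / n : ℝ) ^ n :=
        sum_le_sum fun S hS => (mem_powersetCard.1 hS).2 ▸
          measureReal_iInter_preimage_landingSet_le hmeas hindep hident S
    _ = n.choose k * (k / n : ℝ) ^ n := by simp

end Probability

/-- For i.i.d. nonnegative integer random variables w₁,...,w_n and
W = |{i + wᵢ}|, P(W = αn) ≤ C(n,αn) α^n ≤ (α/(1-α))^{n(1-α)}. -/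
theorem stmt5 {Ω : Type*} [MeasureSpace Ω] [IsProbabilityMeasure (ℙ : Measure Ω)]
    (n : ℕ) (hn : 0 < n) (w : Fin n → Ω → ℕ)
    (hmeas : ∀ i, Measurable (w i))
    (hindep : iIndepFun w ℙ)
    (hident : ∀ i j, Measure.map (w i) ℙ = Measure.map (w j) ℙ)
    (α : ℝ) (hα : α ∈ Set.Ioo (0:ℝ) 1) (k : ℕ) (hk : (k : ℝ) = α * n) :
    (ℙ {ω | (Finset.univ.image (fun i : Fin n => (i : ℕ) + 1 + w i ω)).card = k}).toReal
      ≤ (n.choose k : ℝ) * α ^ n ∧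
    (n.choose k : ℝ) * α ^ n ≤ (α / (1 - α)) ^ ((n : ℝ) * (1 - α)) := by
  obtain ⟨hα0, hα1⟩ := hα
  have : NeZero n := ⟨hn.ne'⟩
  have hkn : k ≤ n := by
    exact_mod_cast (hk ▸ mul_le_of_le_one_left n.cast_nonneg hα1.le : (k : ℝ) ≤ n)
  have hα_eq : α = k / n := by rw [hk]; field_simp
  have hexp : (n : ℝ) * (1 - α) = (n - k : ℕ) := by rw [Nat.cast_sub hkn, hk]; ring
  constructor
  · calc (ℙ {ω | #(univ.image fun i : Fin n => (i : ℕ) + 1 + w i ω) = k}).toReal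
        ≤ Measure.real ℙ {ω | #(univ.image fun i : Fin n => (i : ℕ) + 1 + w i ω) ≤ k} :=
          measureReal_mono (fun ω h => le_of_eq h) (measure_ne_top _ _)
      _ ≤ n.choose k * α ^ n := hα_eq ▸ measureReal_setOf_card_image_le_le hmeas hindep hident hkn
  · rw [hexp, Real.rpow_natCast]
    exact choose_mul_pow_le_div_one_sub_pow hα0.le hα1 hkn
end

section
/- Let w₁, ..., w_n be i.i.d. non-negative integer-valued random variables with P(w₁ = k) = p_k, and let W = |{i + wᵢ : 1 ≤ i ≤ n}|. Then E[W] ≥ (n/2)·(1 + Σ_{k≥0} p_k²). -/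
/-!
`W` is at least `n` minus the number of colliding pairs `i < j`, i.e. those with
`i + wᵢ = j + wⱼ`. By independence such a pair collides with probability
`∑ₖ pₖ pₖ₊ⱼ₋ᵢ`, so for fixed `j` the pairs `i < j` contribute at most
`∑_{k < l} pₖ pₗ = (1 - ∑ₖ pₖ²) / 2`. Summing over `j` and taking expectations,
`E[W] ≥ n - n (1 - ∑ₖ pₖ²) / 2`.
-/

open MeasureTheory ProbabilityTheory Finset
open scoped ENNReal

theorem card_le_card_image_add_card_collisions {ι β : Type*} [Fintype ι] [LinearOrder ι]
    [DecidableEq β] (f : ι → β) :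
    Fintype.card ι ≤ #(univ.image f) +
      #((univ.filter fun ij : ι × ι => ij.1 < ij.2).filter fun ij => f ij.1 = f ij.2) := by
  set C := (univ.filter fun ij : ι × ι => ij.1 < ij.2).filter fun ij => f ij.1 = f ij.2
  -- indices whose value already occurs at a smaller index
  set D := C.image Prod.snd
  have hinj : Set.InjOn f ↑(univ \ D) := by
    have hnot : ∀ i j, i < j → f i = f j → j ∉ univ \ D := fun i j hij hf hj =>
      (mem_sdiff.1 hj).2 (mem_image.2 ⟨(i, j), by simp [C, hij, hf], rfl⟩)
    intro i hi j hj hf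
    rcases lt_trichotomy i j with h | h | h
    · exact absurd hj (hnot i j h hf)
    · exact h
    · exact absurd hi (hnot j i h hf.symm)
  calc Fintype.card ι = #(univ \ D) + #D := (card_sdiff_add_card_eq_card (subset_univ D)).symm
    _ ≤ #(univ.image f) + #C := add_le_add
        ((card_image_of_injOn hinj).symm.le.trans (card_le_card (image_subset_image (subset_univ _))))
        card_image_le

theorem card_le_integral_card_image_add_sum_measureReal {Ω ι β : Type*} [MeasurableSpace Ω]
    (μ : Measure Ω) [IsProbabilityMeasure μ] [Fintype ι] [LinearOrder ι] [DecidableEq β]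
    [MeasurableSpace β] [MeasurableSingletonClass β] [Countable β]
    (X : ι → Ω → β) (hX : ∀ i, Measurable (X i)) :
    (Fintype.card ι : ℝ) ≤ ∫ ω, (#(univ.image fun i => X i ω) : ℝ) ∂μ +
      ∑ ij ∈ univ.filter (fun ij : ι × ι => ij.1 < ij.2), μ.real {ω | X ij.1 ω = X ij.2 ω} := by
  set S := univ.filter fun ij : ι × ι => ij.1 < ij.2
  have hcoll : ∀ ij : ι × ι, MeasurableSet {ω | X ij.1 ω = X ij.2 ω} :=
    fun ij => measurableSet_eq_fun (hX _) (hX _)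
  have hW : Integrable (fun ω => (#(univ.image fun i => X i ω) : ℝ)) μ := by
    refine Integrable.of_bound ((measurable_of_countable
      (fun x : ι → β => (#(univ.image x) : ℝ))).comp (measurable_pi_lambda _ hX)).aestronglyMeasurable
      (Fintype.card ι) (Filter.Eventually.of_forall fun ω => ?_)
    simpa using card_image_le.trans (card_univ (α := ι)).le
  have hN : ∀ ij ∈ S, Integrable ({ω | X ij.1 ω = X ij.2 ω}.indicator (1 : Ω → ℝ)) μ :=
    fun ij _ => (integrable_const (1 : ℝ)).indicator (hcoll ij)
  have hpoint : ∀ ω, (Fintype.card ι : ℝ) ≤ #(univ.image fun i => X i ω) +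
      ∑ ij ∈ S, {ω | X ij.1 ω = X ij.2 ω}.indicator (1 : Ω → ℝ) ω := by
    intro ω
    have := card_le_card_image_add_card_collisions fun i => X i ω
    rw [card_filter] at this
    simp only [Set.indicator_apply, Set.mem_ofPred_eq, Pi.one_apply]
    exact_mod_cast this
  calc (Fintype.card ι : ℝ) = ∫ _, (Fintype.card ι : ℝ) ∂μ := by simp
    _ ≤ ∫ ω, ((#(univ.image fun i => X i ω) : ℝ) +
          ∑ ij ∈ S, {ω | X ij.1 ω = X ij.2 ω}.indicator (1 : Ω → ℝ) ω) ∂μ :=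
        integral_mono (integrable_const _) (hW.add (integrable_finsetSum _ hN)) hpoint
    _ = _ := by
        rw [integral_add hW (integrable_finsetSum _ hN), integral_finsetSum _ hN]
        simp_rw [integral_indicator_one (hcoll _)]

theorem ENNReal.tsum_sq_add_two_mul_tsum_mul_shift_le (P : ℕ → ℝ≥0∞) :
    ∑' k, P k ^ 2 + 2 * ∑' d, ∑' k, P k * P (k + (d + 1)) ≤ (∑' k, P k) ^ 2 := by
  -- the diagonal, the part above it and the part below it of `ℕ × ℕ`
  let e : ℕ ⊕ (ℕ × ℕ) ⊕ (ℕ × ℕ) → ℕ × ℕ :=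
    Sum.elim (fun k => (k, k)) (Sum.elim (fun dk => (dk.2, dk.2 + (dk.1 + 1)))
      (fun dk => (dk.2 + (dk.1 + 1), dk.2)))
  have he : Function.Injective e := by
    rintro (a | a | a) (b | b | b) h <;> simp [e, Prod.ext_iff] at h ⊢ <;> omega
  calc ∑' k, P k ^ 2 + 2 * ∑' d, ∑' k, P k * P (k + (d + 1))
      = ∑' s, P (e s).1 * P (e s).2 := by
        rw [ENNReal.summable.tsum_sum ENNReal.summable, ENNReal.summable.tsum_sum ENNReal.summable]
        simp only [e, Sum.elim_inl, Sum.elim_inr, ENNReal.tsum_prod', two_mul, sq]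
        simp_rw [mul_comm (P (_ + _))]
    _ ≤ ∑' x : ℕ × ℕ, P x.1 * P x.2 := ENNReal.tsum_comp_le_tsum_of_injective he _
    _ = (∑' k, P k) ^ 2 := by
        rw [ENNReal.tsum_prod (f := fun a b => P a * P b), sq, ← ENNReal.tsum_mul_right]
        simp_rw [ENNReal.tsum_mul_left]

theorem ProbabilityTheory.IndepFun.measure_eq_add_const {Ω : Type*} [MeasurableSpace Ω]
    {μ : Measure Ω} {X Y : Ω → ℕ} (hX : Measurable X) (hY : Measurable Y) (h : IndepFun X Y μ)
    (d : ℕ) : μ {ω | X ω = Y ω + d} = ∑' k, μ (X ⁻¹' {k + d}) * μ (Y ⁻¹' {k}) := by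
  have hset : {ω | X ω = Y ω + d} = ⋃ k, X ⁻¹' {k + d} ∩ Y ⁻¹' {k} := by
    ext ω; simp [eq_comm]
  rw [hset, measure_iUnion]
  · exact tsum_congr fun k => h.measure_inter_preimage_eq_mul _ _
      (measurableSet_singleton _) (measurableSet_singleton _)
  · exact fun k l hkl => Set.disjoint_left.2 fun ω hk hl => hkl (hk.2.symm.trans hl.2)
  · exact fun k => (hX (measurableSet_singleton _)).inter (hY (measurableSet_singleton _))

theorem tsum_measure_preimage_singleton_eq_one {Ω : Type*} [MeasurableSpace Ω]
    {μ : Measure Ω} [IsProbabilityMeasure μ] {X : Ω → ℕ} (hX : Measurable X) :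
    ∑' k, μ (X ⁻¹' {k}) = 1 := by
  rw [← measure_iUnion (pairwise_disjoint_fiber X) fun k => hX (measurableSet_singleton k),
    Set.eq_univ_of_forall fun ω => Set.mem_iUnion.2 ⟨X ω, rfl⟩, measure_univ]

theorem sum_lt_pairs_le_mul_tsum (g : ℕ → ℝ≥0∞) (n : ℕ) :
    ∑ ij ∈ univ.filter (fun ij : Fin n × Fin n => ij.1 < ij.2), g (ij.2 - ij.1) ≤
      n * ∑' d, g (d + 1) := by
  have hrow : ∀ j : Fin n, ∑ i ∈ univ.filter (· < j), g (j - i) ≤ ∑' d, g (d + 1) := by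
    intro j
    have hinj : Set.InjOn (fun i : Fin n => (j - i - 1 : ℕ)) ↑(univ.filter (· < j)) := by
      intro a ha b hb hab
      simp only [coe_filter, mem_univ, true_and, Set.mem_ofPred_eq] at ha hb hab
      exact Fin.ext (by omega)
    calc ∑ i ∈ univ.filter (· < j), g (j - i)
        = ∑ i ∈ univ.filter (· < j), g ((j - i - 1 : ℕ) + 1) :=
          sum_congr rfl fun i hi => by
            rw [mem_filter] at hi
            congr 1
            have : (i : ℕ) < j := hi.2
            omega
      _ = ∑ d ∈ (univ.filter (· < j)).image (fun i : Fin n => (j - i - 1 : ℕ)), g (d + 1) :=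
          (sum_image (f := fun d => g (d + 1)) hinj).symm
      _ ≤ ∑' d, g (d + 1) := ENNReal.sum_le_tsum _
  calc ∑ ij ∈ univ.filter (fun ij : Fin n × Fin n => ij.1 < ij.2), g (ij.2 - ij.1)
      = ∑ j : Fin n, ∑ i ∈ univ.filter (· < j), g (j - i) := by
        rw [sum_filter, ← univ_product_univ, sum_product_right]
        simp only [sum_filter]
    _ ≤ ∑ _j : Fin n, ∑' d, g (d + 1) := sum_le_sum fun j _ => hrow j
    _ = n * ∑' d, g (d + 1) := by simp

theorem sum_measure_collision_le {Ω : Type*} [MeasurableSpace Ω] {μ : Measure Ω} {n : ℕ}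
    {w : Fin n → Ω → ℕ} (hmeas : ∀ i, Measurable (w i)) (hindep : iIndepFun w μ)
    {P : ℕ → ℝ≥0∞} (hlaw : ∀ i k, μ (w i ⁻¹' {k}) = P k) :
    ∑ ij ∈ univ.filter (fun ij : Fin n × Fin n => ij.1 < ij.2),
        μ {ω | (ij.1 : ℕ) + 1 + w ij.1 ω = ij.2 + 1 + w ij.2 ω} ≤
      n * ∑' d, ∑' k, P k * P (k + (d + 1)) := by
  have hcoll : ∀ i j : Fin n, i < j →
      μ {ω | (i : ℕ) + 1 + w i ω = j + 1 + w j ω} = ∑' k, P k * P (k + (j - i)) := by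
    intro i j hij
    have hset : {ω | (i : ℕ) + 1 + w i ω = j + 1 + w j ω} = {ω | w i ω = w j ω + (j - i)} := by
      ext ω
      have : (i : ℕ) < j := hij
      simp only [Set.mem_ofPred_eq]
      omega
    rw [hset, (hindep.indepFun hij.ne).measure_eq_add_const (hmeas i) (hmeas j)]
    simp_rw [hlaw, mul_comm (P (_ + _))]
  rw [sum_congr rfl fun ij hij => hcoll ij.1 ij.2 (mem_filter.1 hij).2]
  exact sum_lt_pairs_le_mul_tsum (fun d => ∑' k, P k * P (k + d)) n

theorem sum_measureReal_collision_le {Ω : Type*} [MeasureSpace Ω]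
    [IsProbabilityMeasure (ℙ : Measure Ω)] {n : ℕ} {w : Fin n → Ω → ℕ}
    (hmeas : ∀ i, Measurable (w i)) (hindep : iIndepFun w ℙ) {p : ℕ → ℝ}
    (hp : ∀ i k, (ℙ {ω | w i ω = k}).toReal = p k) :
    ∑ ij ∈ univ.filter (fun ij : Fin n × Fin n => ij.1 < ij.2),
        (ℙ : Measure Ω).real {ω | (ij.1 : ℕ) + 1 + w ij.1 ω = ij.2 + 1 + w ij.2 ω} ≤
      n * ((1 - ∑' k, p k ^ 2) / 2) := by
  rcases n.eq_zero_or_pos with rfl | hn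
  · simp
  set P : ℕ → ℝ≥0∞ := fun k => ℙ (w ⟨0, hn⟩ ⁻¹' {k})
  have hlaw : ∀ i k, ℙ (w i ⁻¹' {k}) = P k := fun i k =>
    (ENNReal.toReal_eq_toReal_iff' (measure_ne_top _ _) (measure_ne_top _ _)).1
      ((hp i k).trans (hp _ k).symm)
  set Q := ∑' d, ∑' k, P k * P (k + (d + 1))
  have hsum := sum_measure_collision_le hmeas hindep hlaw
  have hpairs := ENNReal.tsum_sq_add_two_mul_tsum_mul_shift_le P
  rw [show ∑' k, P k = 1 from tsum_measure_preimage_singleton_eq_one (hmeas _), one_pow] at hpairs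
  have hQ : Q ≠ ∞ := fun h => by simp [Q, h] at hpairs
  have hS : ∑' k, P k ^ 2 ≠ ∞ := fun h => by simp [h] at hpairs
  have hSp : (∑' k, P k ^ 2).toReal = ∑' k, p k ^ 2 := by
    rw [ENNReal.tsum_toReal_eq fun k => ENNReal.pow_ne_top (measure_ne_top _ _)]
    exact tsum_congr fun k => by rw [ENNReal.toReal_pow]; exact congrArg (· ^ 2) (hp _ k)
  have hpairs_real : ∑' k, p k ^ 2 + 2 * Q.toReal ≤ 1 := by
    have := ENNReal.toReal_mono ENNReal.one_ne_top hpairs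
    rwa [ENNReal.toReal_add hS (ENNReal.mul_ne_top ENNReal.ofNat_ne_top hQ), ENNReal.toReal_mul,
      hSp, ENNReal.toReal_ofNat, ENNReal.toReal_one] at this
  have hsum_real := ENNReal.toReal_mono (ENNReal.mul_ne_top (ENNReal.natCast_ne_top n) hQ) hsum
  rw [ENNReal.toReal_sum fun _ _ => measure_ne_top _ _, ENNReal.toReal_mul,
    ENNReal.toReal_natCast] at hsum_real
  calc _ ≤ n * Q.toReal := hsum_real
    _ ≤ n * ((1 - ∑' k, p k ^ 2) / 2) := by gcongr; linarith

/-- E[W] ≥ (n/2)(1 + Σ p_k²) where W = |{i + wᵢ}| for i.i.d. wᵢ with law (p_k). -/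
theorem stmt6 {Ω : Type*} [MeasureSpace Ω] [IsProbabilityMeasure (ℙ : Measure Ω)]
    (n : ℕ) (w : Fin n → Ω → ℕ)
    (hmeas : ∀ i, Measurable (w i))
    (hindep : iIndepFun w ℙ)
    (p : ℕ → ℝ)
    (hp : ∀ (i : Fin n) (k : ℕ), (ℙ {ω | w i ω = k}).toReal = p k) :
    ((n : ℝ) / 2) * (1 + ∑' k, p k ^ 2) ≤
      ∫ ω, ((Finset.univ.image (fun i : Fin n => (i : ℕ) + 1 + w i ω)).card : ℝ) := by
  have hcount := card_le_integral_card_image_add_sum_measureReal ℙ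
    (fun (i : Fin n) ω => (i : ℕ) + 1 + w i ω) fun i => measurable_const.add (hmeas i)
  have hcoll := sum_measureReal_collision_le hmeas hindep hp
  rw [Fintype.card_fin] at hcount
  linarith
end

section
/- Fix a set A ⊆ {0,1,...,n−1} with |A| = αn for some α ∈ (0,1). Let w₁, ..., w_n be i.i.d. non-negative integer-valued random variables. Then P({i + wᵢ mod n : 1 ≤ i ≤ n} ⊆ A) ≤ α^n. -/
open MeasureTheory ProbabilityTheory Finset

/-!
Write `Sᵢ = {k | (i + 1 + k) mod n ∈ A}`. By independence the probability is `∏ᵢ P(wᵢ ∈ Sᵢ)`.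
For a fixed residue `a`, the sets `{k | (i + 1 + k) mod n = a}`, `i < n`, are pairwise disjoint,
so under the common law of the `wᵢ` their probabilities sum to at most `1`; summing over `a ∈ A`
gives `∑ᵢ P(wᵢ ∈ Sᵢ) ≤ |A| = αn`, and AM-GM turns this into `∏ᵢ P(wᵢ ∈ Sᵢ) ≤ αⁿ`.
-/

theorem Real.prod_le_pow_card_of_sum_le {ι : Type*} {s : Finset ι} {p : ι → ℝ} {a : ℝ}
    (hp : ∀ i ∈ s, 0 ≤ p i) (hsum : ∑ i ∈ s, p i ≤ #s * a) : ∏ i ∈ s, p i ≤ a ^ #s := by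
  rcases s.eq_empty_or_nonempty with rfl | hs
  · simp
  have hcard : (0 : ℝ) < #s := by exact_mod_cast hs.card_pos
  have hprod : 0 ≤ ∏ i ∈ s, p i := prod_nonneg hp
  have hmean : (∏ i ∈ s, p i) ^ ((#s : ℕ) : ℝ)⁻¹ ≤ a := by
    have := Real.geom_mean_le_arith_mean s (fun _ ↦ 1) p (fun _ _ ↦ zero_le_one) (by simpa) hp
    simp only [Real.rpow_one, one_mul, sum_const, nsmul_eq_mul, mul_one] at this
    exact this.trans ((div_le_iff₀' hcard).2 hsum)
  calc ∏ i ∈ s, p i = ((∏ i ∈ s, p i) ^ ((#s : ℕ) : ℝ)⁻¹) ^ #s :=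
        (Real.rpow_inv_natCast_pow hprod hs.card_pos.ne').symm
    _ ≤ a ^ #s := pow_le_pow_left₀ (by positivity) hmean _

theorem Nat.pairwise_disjoint_add_mod_eq (n c a : ℕ) :
    Pairwise fun i j : Fin n ↦
      Disjoint {k : ℕ | ((i : ℕ) + c + k) % n = a} {k | ((j : ℕ) + c + k) % n = a} := by
  intro i j hij
  refine Set.disjoint_left.2 fun k (hi : _ = a) (hj : _ = a) ↦ hij (Fin.ext ?_)
  have : (i : ℕ) + (c + k) ≡ j + (c + k) [MOD n] := by
    simp only [Nat.ModEq, ← add_assoc, hi, hj]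
  exact (Nat.ModEq.add_right_cancel' _ this).eq_of_lt_of_lt i.2 j.2

section ShiftedResidues

variable (μ : Measure ℕ) (n c : ℕ)

theorem sum_measureReal_add_mod_eq_le [IsFiniteMeasure μ] (a : ℕ) :
    ∑ i : Fin n, μ.real {k | ((i : ℕ) + c + k) % n = a} ≤ μ.real Set.univ :=
  sum_measureReal_le_measureReal_univ (fun _ _ ↦ .of_discrete)
    fun _ _ _ _ hij ↦ Nat.pairwise_disjoint_add_mod_eq n c a hij

theorem sum_measureReal_add_mod_mem_le [IsProbabilityMeasure μ] (A : Finset ℕ) :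
    ∑ i : Fin n, μ.real {k | ((i : ℕ) + c + k) % n ∈ A} ≤ #A := by
  have hsplit (i : Fin n) : μ.real {k | ((i : ℕ) + c + k) % n ∈ A} =
      ∑ a ∈ A, μ.real {k | ((i : ℕ) + c + k) % n = a} := by
    rw [← measureReal_biUnion_finset _ fun _ _ ↦ .of_discrete]
    · congr 1
      ext k
      simp
    · exact fun a _ b _ hab ↦ Set.disjoint_left.2 fun _ ha hb ↦ hab (ha.symm.trans hb)
  calc ∑ i : Fin n, μ.real {k | ((i : ℕ) + c + k) % n ∈ A}
      = ∑ a ∈ A, ∑ i : Fin n, μ.real {k | ((i : ℕ) + c + k) % n = a} := by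
        simp only [hsplit]
        exact sum_comm
    _ ≤ ∑ _a ∈ A, (1 : ℝ) :=
        sum_le_sum fun a _ ↦ (sum_measureReal_add_mod_eq_le μ n c a).trans_eq probReal_univ
    _ = #A := by simp

end ShiftedResidues

theorem stmt7_general {Ω : Type*} [MeasureSpace Ω] [IsProbabilityMeasure (ℙ : Measure Ω)]
    (n : ℕ) (w : Fin n → Ω → ℕ)
    (hmeas : ∀ i, Measurable (w i))
    (hindep : iIndepFun w ℙ)
    (hident : ∀ i j, Measure.map (w i) ℙ = Measure.map (w j) ℙ)
    (A : Finset ℕ)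
    (α : ℝ) (hcard : (A.card : ℝ) = α * n) :
    (ℙ {ω | ∀ i : Fin n, ((i : ℕ) + 1 + w i ω) % n ∈ A}).toReal ≤ α ^ n := by
  set S : Fin n → Set ℕ := fun i ↦ {k | ((i : ℕ) + 1 + k) % n ∈ A}
  have hevent : {ω | ∀ i : Fin n, ((i : ℕ) + 1 + w i ω) % n ∈ A} = ⋂ i, w i ⁻¹' S i := by
    ext ω
    simp [S]
  have hprod : (ℙ (⋂ i, w i ⁻¹' S i)).toReal = ∏ i, Measure.real ℙ (w i ⁻¹' S i) := by
    rw [hindep.meas_iInter fun i ↦ ⟨S i, .of_discrete, rfl⟩, ENNReal.toReal_prod]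
    rfl
  have hsum : ∑ i, Measure.real ℙ (w i ⁻¹' S i) ≤ n * α := by
    rcases Nat.eq_zero_or_pos n with rfl | hn
    · simp
    set i₀ : Fin n := ⟨0, hn⟩
    have hlaw (i : Fin n) : Measure.real ℙ (w i ⁻¹' S i) = (Measure.map (w i₀) ℙ).real (S i) := by
      rw [hident i₀ i, map_measureReal_apply (hmeas i) .of_discrete]
    have := Measure.isProbabilityMeasure_map (μ := ℙ) (hmeas i₀).aemeasurable
    simp only [hlaw, mul_comm _ α, ← hcard]
    exact sum_measureReal_add_mod_mem_le _ n 1 A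
  rw [hevent, hprod]
  simpa using Real.prod_le_pow_card_of_sum_le (s := univ) (a := α)
    (fun i _ ↦ measureReal_nonneg (s := w i ⁻¹' S i)) (by simpa using hsum)

/-- For A ⊆ {0,...,n-1} with |A| = αn and i.i.d. nonnegative integer wᵢ,
P({i + wᵢ mod n} ⊆ A) ≤ α^n. -/
theorem stmt7 {Ω : Type*} [MeasureSpace Ω] [IsProbabilityMeasure (ℙ : Measure Ω)]
    (n : ℕ) (hn : 0 < n) (w : Fin n → Ω → ℕ)
    (hmeas : ∀ i, Measurable (w i))
    (hindep : iIndepFun w ℙ)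
    (hident : ∀ i j, Measure.map (w i) ℙ = Measure.map (w j) ℙ)
    (A : Finset ℕ) (hA : A ⊆ Finset.range n)
    (α : ℝ) (hα : α ∈ Set.Ioo (0:ℝ) 1) (hcard : (A.card : ℝ) = α * n) :
    (ℙ {ω | ∀ i : Fin n, ((i : ℕ) + 1 + w i ω) % n ∈ A}).toReal ≤ α ^ n :=
  stmt7_general n w hmeas hindep hident A α hcard
end

section
/- Define f₁(α) = (α/(1−α))^{1−α} · 2^{1/2−α} for α ∈ (0,1). Then there exists c₀ > 1/2 such that f₁ is strictly monotone increasing on (0, c₀). -/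
/-!
Write `f₁ = exp ∘ g` with `g α = (1 - α) (log α - log (1 - α)) + (1/2 - α) log 2` on `(0, 1)`.
Then `g' α = log ((1 - α) / (2 α)) + 1 / α`, and for `α < 3/5` we have `(1 - α) / (2 α) > 1/3`
and `1 / α > 5/3 > log 3`, so `g' > 0` there and `c₀ = 3/5` works.
-/

open Real Set

noncomputable def f₁ (α : ℝ) : ℝ := (α / (1 - α)) ^ (1 - α) * (2 : ℝ) ^ ((1 : ℝ) / 2 - α)

noncomputable def logF₁ (α : ℝ) : ℝ :=
  (1 - α) * (log α - log (1 - α)) + ((1 : ℝ) / 2 - α) * log 2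

lemma f₁_eq_exp_logF₁ {α : ℝ} (h₀ : 0 < α) (h₁ : α < 1) : f₁ α = exp (logF₁ α) := by
  have h₁' : 0 < 1 - α := sub_pos.2 h₁
  rw [f₁, rpow_def_of_pos (div_pos h₀ h₁'), rpow_def_of_pos two_pos, ← exp_add,
    log_div h₀.ne' h₁'.ne', logF₁]
  ring_nf

lemma hasDerivAt_logF₁ {α : ℝ} (h₀ : 0 < α) (h₁ : α < 1) :
    HasDerivAt logF₁ (-log α + log (1 - α) + 1 / α - log 2) α := by
  have h₁' : 0 < 1 - α := sub_pos.2 h₁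
  have hlin : HasDerivAt (fun x : ℝ => 1 - x) (-1) α := by
    simpa using (hasDerivAt_id α).const_sub 1
  have hlogs : HasDerivAt (fun x => log x - log (1 - x)) (α⁻¹ - (1 - α)⁻¹ * (-1)) α :=
    (hasDerivAt_log h₀.ne').sub ((hasDerivAt_log h₁'.ne').comp α hlin)
  have hconst : HasDerivAt (fun x : ℝ => ((1 : ℝ) / 2 - x) * log 2) (-1 * log 2) α := by
    simpa using ((hasDerivAt_id α).const_sub ((1 : ℝ) / 2)).mul_const (log 2)
  refine ((hlin.mul hlogs).add hconst).congr_deriv ?_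
  rw [one_div]
  linear_combination mul_inv_cancel₀ h₁'.ne' - mul_inv_cancel₀ h₀.ne'

lemma deriv_logF₁_pos {α : ℝ} (h₀ : 0 < α) (h₁ : α < 3 / 5) :
    0 < -log α + log (1 - α) + 1 / α - log 2 := by
  have h₁' : 0 < 1 - α := by linarith
  have hratio : log (1 / 3) < log ((1 - α) / (2 * α)) :=
    log_lt_log (by norm_num) (by rw [lt_div_iff₀ (by positivity)]; linarith)
  have hinv : 5 / 3 < 1 / α := by rw [lt_div_iff₀ h₀]; linarith
  rw [log_div h₁'.ne' (by positivity), log_mul two_ne_zero h₀.ne', one_div, log_inv] at hratio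
  linarith [log_three_lt_d9]

lemma strictMonoOn_logF₁ : StrictMonoOn logF₁ (Ioo 0 (3 / 5)) := by
  have hderiv : ∀ α ∈ Ioo (0 : ℝ) (3 / 5),
      HasDerivAt logF₁ (-log α + log (1 - α) + 1 / α - log 2) α :=
    fun α hα => hasDerivAt_logF₁ hα.1 (by linarith [hα.2])
  refine strictMonoOn_of_deriv_pos (convex_Ioo _ _)
    (fun α hα => (hderiv α hα).continuousAt.continuousWithinAt) fun α hα => ?_
  rw [interior_Ioo] at hα
  rw [(hderiv α hα).deriv]
  exact deriv_logF₁_pos hα.1 hα.2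

/-- There exists c₀ > 1/2 such that f₁(α) = (α/(1-α))^{1-α} 2^{1/2-α} is strictly
increasing on (0, c₀). -/
theorem stmt8 :
    ∃ c₀ : ℝ, 1/2 < c₀ ∧
      StrictMonoOn (fun α : ℝ => (α / (1 - α)) ^ (1 - α) * (2:ℝ) ^ ((1:ℝ)/2 - α))
        (Set.Ioo (0:ℝ) c₀) := by
  refine ⟨3 / 5, by norm_num, ?_⟩
  have hexp : StrictMonoOn (exp ∘ logF₁) (Ioo 0 (3 / 5)) :=
    exp_strictMono.comp_strictMonoOn strictMonoOn_logF₁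
  exact hexp.congr fun α hα => (f₁_eq_exp_logF₁ hα.1 (by linarith [hα.2])).symm
end

section
/- Let M ∈ ℕ and let f(z) = Σ_{i=0}^n aᵢzⁱ be a nonzero polynomial with integer coefficients satisfying |aᵢ| ≤ M for all i. Then the number of roots of f (counted with multiplicity) of modulus at least 3/2 is at most 64M. -/
/-!
Let `G(z) = zⁿ f(1/z)` be the reverse of `f`. Its roots are the inverses of the nonzero roots of
`f`, so the roots of `f` of modulus at least `3/2` are the roots of `G` in the closed disc of
radius `2/3`. Now `G(0)` is the leading coefficient of `f`, a nonzero integer, and on the circle of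
radius `8/9` the coefficient bound gives `|G| ≤ M / (1 - 8/9) = 9M`. Jensen's inequality bounds the
number of roots of `G` in the smaller disc by `log (9M) / log (4/3) ≤ 36M`.
-/

open Polynomial Metric Real
open scoped Classical

namespace Polynomial

section Reverse

variable {K : Type*} [Field K]

theorem reverse_X_sub_C_of_ne_zero {z : K} (hz : z ≠ 0) :
    (X - C z).reverse = C (-z) * (X - C z⁻¹) := by
  have h1 : (1 : K[X]).reverse = 1 := by simpa using reverse_C (1 : K)
  have hX : (X : K[X]).reverse = 1 := by simpa [h1] using reverse_X_mul (1 : K[X])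
  rw [sub_eq_add_neg, ← C_neg, reverse_add_C, hX, natDegree_X, pow_one, mul_sub, ← C_mul,
    neg_mul, mul_inv_cancel₀ hz]
  simp only [map_neg, map_one]
  ring

theorem reverse_multiset_prod_X_sub_C (S : Multiset K) :
    (S.map (fun z => X - C z)).prod.reverse =
      C ((S.filter (· ≠ 0)).map (fun z => -z)).prod *
        ((S.filter (· ≠ 0)).map (fun z => X - C z⁻¹)).prod := by
  induction S using Multiset.induction with
  | empty => simpa using reverse_C (1 : K)
  | cons z S ih =>
    rw [Multiset.map_cons, Multiset.prod_cons]
    by_cases hz : z = 0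
    · rw [hz, Multiset.filter_cons_of_neg (p := (· ≠ 0)) _ (by simp), C_0, sub_zero,
        reverse_X_mul, ih]
    · rw [Multiset.filter_cons_of_pos (p := (· ≠ 0)) _ hz, reverse_mul_of_domain, ih,
        reverse_X_sub_C_of_ne_zero hz, Multiset.map_cons, Multiset.map_cons, Multiset.prod_cons,
        Multiset.prod_cons, C_mul]
      ring

theorem roots_reverse [IsAlgClosed K] (p : K[X]) :
    p.reverse.roots = (p.roots.filter (· ≠ 0)).map (·⁻¹) := by
  rcases eq_or_ne p 0 with rfl | hp
  · simp
  nth_rw 1 [← C_leadingCoeff_mul_prod_multiset_X_sub_C (p := p)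
    IsAlgClosed.card_roots_eq_natDegree]
  rw [reverse_mul_of_domain, reverse_C, reverse_multiset_prod_X_sub_C, ← mul_assoc, ← C_mul,
    roots_C_mul _ ?_, ← Function.comp_def (fun a => X - C a) (·⁻¹), ← Multiset.map_map,
    roots_multiset_prod_X_sub_C]
  refine mul_ne_zero (leadingCoeff_ne_zero.mpr hp) (Multiset.prod_ne_zero ?_)
  simp

end Reverse

theorem card_roots_filter_le_norm_eq_card_roots_reverse {K : Type*} [NormedField K]
    [IsAlgClosed K] (p : K[X]) {ρ : ℝ} (hρ : 0 < ρ) :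
    Multiset.card (p.roots.filter (ρ ≤ ‖·‖)) =
      Multiset.card (p.reverse.roots.filter (· ∈ closedBall 0 ρ⁻¹)) := by
  rw [roots_reverse, Multiset.filter_map, Multiset.card_map, Multiset.filter_filter]
  congr 1
  refine Multiset.filter_congr fun z _ => ?_
  by_cases hz : z = 0
  · simp [hz, hρ]
  · simp [hz, inv_le_inv₀ (norm_pos_iff.mpr hz) hρ]

section Analytic

variable {𝕜 : Type*} [NontriviallyNormedField 𝕜]

theorem analyticOrderAt_eval_eq_rootMultiplicity {p : 𝕜[X]} (hp : p ≠ 0) (a : 𝕜) :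
    analyticOrderAt (fun z => p.eval z) a = p.rootMultiplicity a := by
  obtain ⟨q, hpq, hq⟩ := exists_eq_pow_rootMultiplicity_mul_and_not_dvd p hp a
  refine (AnalyticOnNhd.eval_polynomial p a trivial).analyticOrderAt_eq_natCast.mpr
    ⟨fun z => q.eval z, AnalyticOnNhd.eval_polynomial q a trivial, ?_, .of_forall fun z => ?_⟩
  · rwa [dvd_iff_isRoot] at hq
  · simp only [smul_eq_mul]
    nth_rw 1 [hpq]
    simp

theorem finsum_divisor_eval_eq_card_roots {p : 𝕜[X]} (hp : p ≠ 0) (U : Set 𝕜) :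
    ∑ᶠ u, MeromorphicOn.divisor (fun z => p.eval z) U u =
      Multiset.card (p.roots.filter (· ∈ U)) := by
  set S := p.roots.filter (· ∈ U)
  have hdiv : ∀ u, MeromorphicOn.divisor (fun z => p.eval z) U u = S.count u := by
    intro u
    rw [Multiset.count_filter, count_roots]
    split_ifs with hu
    · rw [MeromorphicOn.AnalyticOnNhd.divisor_apply
        ((AnalyticOnNhd.eval_polynomial p).mono (Set.subset_univ _)) hu,
        analyticOrderAt_eval_eq_rootMultiplicity hp]
      simp
    · exact Function.locallyFinsuppWithin.apply_eq_zero_of_notMem _ hu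
  simp_rw [hdiv]
  rw [finsum_eq_sum_of_support_subset _ (s := S.toFinset) (fun u hu => by simpa using hu),
    ← Nat.cast_sum, Multiset.toFinset_sum_count_eq]

end Analytic

theorem card_roots_filter_mem_closedBall_le {p : ℂ[X]} {c : ℂ} {r R B : ℝ} (hr : 0 < r) (hrR : r < R)
    (hB : 1 ≤ B) (hc : p.eval c ≠ 0) (hbound : ∀ z ∈ sphere c R, ‖p.eval z‖ ≤ B) :
    (Multiset.card (p.roots.filter (· ∈ closedBall c r)) : ℝ) ≤
      log (B / ‖p.eval c‖) / log (R / r) := by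
  have hp : p ≠ 0 := fun h => hc (by simp [h])
  have hR : 0 < R := hr.trans hrR
  have jensen := (AnalyticOnNhd.eval_polynomial p).mono (Set.subset_univ (closedBall c |R|))
    |>.sum_divisor_le (abs_pos.mpr hr.ne') (by rwa [abs_of_pos hr, abs_of_pos hR]) hB hc
      (by rwa [abs_of_pos hR])
  rwa [abs_of_pos hr, finsum_divisor_eval_eq_card_roots hp, Int.cast_natCast] at jensen

theorem norm_eval_le_of_norm_coeff_le {𝕜 : Type*} [NormedField 𝕜] {p : 𝕜[X]} {M : ℝ}
    (hM : ∀ i, ‖p.coeff i‖ ≤ M) {z : 𝕜} (hz : ‖z‖ < 1) : ‖p.eval z‖ ≤ M / (1 - ‖z‖) := by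
  have hM0 : 0 ≤ M := (norm_nonneg _).trans (hM 0)
  rw [eval_eq_sum_range]
  calc ‖∑ i ∈ Finset.range (p.natDegree + 1), p.coeff i * z ^ i‖
      ≤ ∑ i ∈ Finset.range (p.natDegree + 1), M * ‖z‖ ^ i := by
        refine (norm_sum_le _ _).trans (Finset.sum_le_sum fun i _ => ?_)
        rw [norm_mul, norm_pow]
        exact mul_le_mul_of_nonneg_right (hM i) (by positivity)
    _ = M * ∑ i ∈ Finset.Ico 0 (p.natDegree + 1), ‖z‖ ^ i := by
        rw [Finset.mul_sum, Finset.range_eq_Ico]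
    _ ≤ M * (‖z‖ ^ 0 / (1 - ‖z‖)) := by
        gcongr
        exact geom_sum_Ico_le_of_lt_one (norm_nonneg z) hz
    _ = M / (1 - ‖z‖) := by rw [pow_zero, mul_one_div]

end Polynomial

open Classical in
/-- A nonzero integer polynomial with coefficients bounded by M has at most 64M roots
(with multiplicity) of modulus at least 3/2. -/
theorem stmt11 (M : ℕ) (f : Polynomial ℤ) (hf : f ≠ 0)
    (hcoeff : ∀ i, |f.coeff i| ≤ (M : ℤ)) :
    (((f.map (Int.castRingHom ℂ)).roots.filter
      (fun z => (3:ℝ)/2 ≤ ‖z‖)).card) ≤ 64 * M := by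
  rw [card_roots_filter_le_norm_eq_card_roots_reverse _ (by norm_num : (0 : ℝ) < 3/2)]
  set G := (f.map (Int.castRingHom ℂ)).reverse
  have hlead : (1 : ℤ) ≤ |f.leadingCoeff| := Int.one_le_abs (leadingCoeff_ne_zero.mpr hf)
  have hG0 : 1 ≤ ‖G.eval 0‖ := by
    rw [← coeff_zero_eq_eval_zero, coeff_zero_reverse,
      leadingCoeff_map_of_injective (RingHom.injective_int _), eq_intCast, Complex.norm_intCast]
    exact_mod_cast hlead
  have hM : (1 : ℝ) ≤ M := by exact_mod_cast hlead.trans (hcoeff f.natDegree)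
  have hGcoeff : ∀ i, ‖G.coeff i‖ ≤ M := fun i => by
    simpa [G, coeff_reverse] using (Int.cast_le (R := ℝ)).mpr (hcoeff _)
  have hGbound : ∀ z ∈ sphere (0 : ℂ) (8/9), ‖G.eval z‖ ≤ 9 * M := fun z hz => by
    rw [mem_sphere_zero_iff_norm] at hz
    have := norm_eval_le_of_norm_coeff_le hGcoeff (z := z) (by rw [hz]; norm_num)
    rwa [hz, show (1 : ℝ) - 8/9 = 9⁻¹ by norm_num, div_inv_eq_mul, mul_comm] at this
  have hlog_den : 1 / 4 ≤ log ((8/9) / (3/2)⁻¹) :=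
    calc (1 : ℝ) / 4 = 1 - ((8/9) / (3/2)⁻¹)⁻¹ := by norm_num
      _ ≤ log ((8/9) / (3/2)⁻¹) := one_sub_inv_le_log_of_pos (by norm_num)
  have hk : (Multiset.card (G.roots.filter (· ∈ closedBall 0 (3/2)⁻¹)) : ℝ) ≤ 36 * M :=
    calc _ ≤ log (9 * M / ‖G.eval 0‖) / log ((8/9) / (3/2)⁻¹) :=
          card_roots_filter_mem_closedBall_le (by norm_num) (by norm_num) (by linarith)
            (norm_pos_iff.mp (one_pos.trans_le hG0)) hGbound
      _ ≤ 9 * M / (1 / 4) := by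
          refine div_le_div₀ (by positivity) ((log_le_self (by positivity)).trans ?_)
            (by norm_num) hlog_den
          exact div_le_self (by positivity) hG0
      _ = 36 * M := by ring
  exact_mod_cast hk.trans (by linarith : (36 * M : ℝ) ≤ 64 * M)
end

section
/- Let ξ₀, ..., ξ_n be i.i.d. integer-valued random variables with |ξ₀| ≤ M almost surely and max_{x∈ℤ} P(ξ₀ = x) ≤ 1/2, and let P(z) = Σ_{j=0}^n ξ_j z^j. Then for every B > 0 there exists C > 0 such that for a ∈ {−2, 2}: P(|P(a)| ≤ n^{−C}·2^n) = O(n^{−B}). -/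
/-!
Take `k ≈ B log₂ n` of the coefficients, at the indices `n - dk, n - dk + d, …` spaced
`d = M + 1` apart. Digits of size at most `2M < 2^d` cannot carry into each other, so two
different choices of these `k` coefficients give values of `∑_{j ∈ J} ξ_j a^j` differing by a
nonzero multiple of `2^(n - dk)`, which exceeds the width `2 n^(-C) 2^n` of the target window.
Conditioning on the other coefficients, which are independent of these, at most one choice of
the `k` coefficients puts `P(a)` into the window, and it has probability at most
`2^(-k) ≤ n^(-B)`.
-/

open MeasureTheory ProbabilityTheory
open scoped ENNReal

section Digits

variable {a : ℤ} {d m : ℕ} {J : Finset ℕ}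

theorem eq_zero_of_sum_mul_pow_eq_zero (ha : a ≠ 0)
    (hJ : ∀ i ∈ J, ∀ j ∈ J, i < j → i + d ≤ j) {c : ℕ → ℤ} (hc : ∀ j ∈ J, |c j| < |a| ^ d)
    (hsum : ∑ j ∈ J, c j * a ^ j = 0) : ∀ j ∈ J, c j = 0 := by
  -- The lowest nonzero digit would have to be divisible by `a ^ d`.
  by_contra! h
  set S := J.filter (c · ≠ 0)
  have hS : S.Nonempty := let ⟨j, hj, hcj⟩ := h; ⟨j, by simp [S, hj, hcj]⟩
  set j₀ := S.min' hS
  obtain ⟨hj₀J, hcj₀⟩ : j₀ ∈ J ∧ c j₀ ≠ 0 := by simpa [S] using S.min'_mem hS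
  have htail : a ^ (j₀ + d) ∣ ∑ j ∈ J.erase j₀, c j * a ^ j := by
    refine Finset.dvd_sum fun j hj => ?_
    obtain ⟨hjj₀, hjJ⟩ := Finset.mem_erase.mp hj
    by_cases hcj : c j = 0
    · simp [hcj]
    · have hlt : j₀ < j := (S.min'_le j (by simp [S, hjJ, hcj])).lt_of_ne' hjj₀
      exact (pow_dvd_pow a (hJ _ hj₀J _ hjJ hlt)).mul_left _
  have hhead : a ^ j₀ * a ^ d ∣ c j₀ * a ^ j₀ := by
    rw [← pow_add, eq_neg_of_add_eq_zero_left ((Finset.add_sum_erase J _ hj₀J).trans hsum)]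
    exact htail.neg_right
  have hdvd : |a| ^ d ∣ |c j₀| := by
    rw [← abs_pow, abs_dvd_abs]
    exact (mul_dvd_mul_iff_left (pow_ne_zero j₀ ha)).mp (by rwa [mul_comm (c j₀)] at hhead)
  exact (Int.le_of_dvd (abs_pos.mpr hcj₀) hdvd).not_gt (hc j₀ hj₀J)

theorem eq_zero_of_abs_sum_mul_pow_lt (ha : a ≠ 0)
    (hJ : ∀ i ∈ J, ∀ j ∈ J, i < j → i + d ≤ j) (hJm : ∀ j ∈ J, m ≤ j) {c : ℕ → ℤ}
    (hc : ∀ j ∈ J, |c j| < |a| ^ d) (hsum : |∑ j ∈ J, c j * a ^ j| < |a| ^ m) :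
    ∀ j ∈ J, c j = 0 := by
  -- All exponents being at least `m`, the sum is a multiple of `a ^ m`.
  refine eq_zero_of_sum_mul_pow_eq_zero ha hJ hc (Int.eq_zero_of_abs_lt_dvd ?_ hsum)
  rw [← abs_pow, abs_dvd]
  exact Finset.dvd_sum fun j hj => (pow_dvd_pow a (hJm j hj)).mul_left _

end Digits

section Probability

variable {Ω : Type*} [MeasurableSpace Ω] {μ : Measure Ω}

theorem measure_add_mem_le_of_indepFun [IsProbabilityMeasure μ] {T R : Ω → ℤ}
    (hR : Measurable R) (hTR : IndepFun T R μ) {S : Set ℤ} {p : ℝ≥0∞}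
    (hT : ∀ r, μ {ω | T ω + r ∈ S} ≤ p) : μ {ω | T ω + R ω ∈ S} ≤ p :=
  calc μ {ω | T ω + R ω ∈ S}
      ≤ μ (⋃ r, R ⁻¹' {r} ∩ {ω | T ω + r ∈ S}) :=
        measure_mono fun ω hω => Set.mem_iUnion.mpr ⟨R ω, rfl, hω⟩
    _ ≤ ∑' r, μ (R ⁻¹' {r} ∩ {ω | T ω + r ∈ S}) := measure_iUnion_le _
    _ = ∑' r, μ (R ⁻¹' {r}) * μ {ω | T ω + r ∈ S} := by
        refine tsum_congr fun r => ?_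
        rw [Set.inter_comm, mul_comm]
        exact hTR.measure_inter_preimage_eq_mul {x | x + r ∈ S} {r} .of_discrete
          (measurableSet_singleton r)
    _ ≤ ∑' r, μ (R ⁻¹' {r}) * p := ENNReal.tsum_le_tsum fun r => mul_le_mul_right (hT r) _
    _ = p := by
        rw [ENNReal.tsum_mul_right, ← measure_iUnion (pairwise_disjoint_fiber R)
          fun r => hR (measurableSet_singleton r)]
        simp [← Set.preimage_iUnion, Set.iUnion_of_singleton]

theorem indepFun_sum_sum {ι β : Type*} [Countable β] [MeasurableSpace β]
    [MeasurableSingletonClass β] {ξ : ι → Ω → β} (hmeas : ∀ i, Measurable (ξ i))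
    (hindep : iIndepFun ξ μ) {s t : Finset ι} (hst : Disjoint s t) (f : ι → β → ℤ) :
    IndepFun (fun ω => ∑ i ∈ s, f i (ξ i ω)) (fun ω => ∑ i ∈ t, f i (ξ i ω)) μ := by
  have h := (hindep.indepFun_finset s t hst hmeas).comp
    (φ := fun v : s → β => ∑ i : s, f i (v i)) (ψ := fun v : t → β => ∑ i : t, f i (v i))
    (measurable_of_countable _) (measurable_of_countable _)
  convert h using 1 <;> funext ω
  exacts [(Finset.sum_coe_sort s fun i => f i (ξ i ω)).symm,
    (Finset.sum_coe_sort t fun i => f i (ξ i ω)).symm]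

variable {ξ : ℕ → Ω → ℤ} {J : Finset ℕ} {a : ℤ} {d m M : ℕ} {p : ℝ≥0∞}

theorem measure_sum_mul_pow_mem_le (hindep : iIndepFun ξ μ)
    (hbdd : ∀ j ∈ J, ∀ᵐ ω ∂μ, |ξ j ω| ≤ M) (hatom : ∀ j ∈ J, ∀ x, μ (ξ j ⁻¹' {x}) ≤ p)
    (ha : a ≠ 0) (hM : 2 * M < |a| ^ d) (hJ : ∀ i ∈ J, ∀ j ∈ J, i < j → i + d ≤ j)
    (hJm : ∀ j ∈ J, m ≤ j) {S : Set ℤ} (hS : ∀ z ∈ S, ∀ w ∈ S, |z - w| < |a| ^ m) :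
    μ {ω | ∑ j ∈ J, ξ j ω * a ^ j ∈ S} ≤ p ^ J.card := by
  set G := {ω | ∀ j ∈ J, |ξ j ω| ≤ M}
  have hG : μ Gᶜ = 0 := ae_iff.mp ((Filter.eventually_all_finset J).mpr hbdd)
  rw [← measure_inter_conull hG]
  rcases ({ω | ∑ j ∈ J, ξ j ω * a ^ j ∈ S} ∩ G).eq_empty_or_nonempty with h | ⟨ω₀, hω₀S, hω₀G⟩
  · simp [h]
  have hsub : {ω | ∑ j ∈ J, ξ j ω * a ^ j ∈ S} ∩ G ⊆ ⋂ j ∈ J, ξ j ⁻¹' {ξ j ω₀} := by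
    rintro ω ⟨hωS, hωG⟩
    have hdiff := eq_zero_of_abs_sum_mul_pow_lt (c := fun j => ξ j ω - ξ j ω₀) ha hJ hJm
      (fun j hj => by
        have := abs_sub (ξ j ω) (ξ j ω₀)
        linarith [hωG j hj, hω₀G j hj])
      (by simpa only [sub_mul, Finset.sum_sub_distrib] using hS _ hωS _ hω₀S)
    simpa [sub_eq_zero] using hdiff
  calc μ ({ω | ∑ j ∈ J, ξ j ω * a ^ j ∈ S} ∩ G)
      ≤ μ (⋂ j ∈ J, ξ j ⁻¹' {ξ j ω₀}) := measure_mono hsub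
    _ = ∏ j ∈ J, μ (ξ j ⁻¹' {ξ j ω₀}) :=
        hindep.meas_biInter fun j _ => ⟨{ξ j ω₀}, measurableSet_singleton _, rfl⟩
    _ ≤ p ^ J.card := Finset.prod_le_pow_card _ _ _ fun j hj => hatom j hj _

theorem measure_abs_sum_range_mul_pow_le [IsProbabilityMeasure μ] (hmeas : ∀ j, Measurable (ξ j))
    (hindep : iIndepFun ξ μ) (hbdd : ∀ j, ∀ᵐ ω ∂μ, |ξ j ω| ≤ M)
    (hatom : ∀ j x, μ (ξ j ⁻¹' {x}) ≤ p) (ha : a ≠ 0) (hd : 0 < d) (hM : 2 * M < |a| ^ d)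
    {k n : ℕ} (hkn : d * k ≤ n) {ε : ℝ} (hε : 2 * ε < |(a : ℝ)| ^ (n - d * k)) :
    μ {ω | ((|∑ j ∈ Finset.range (n + 1), ξ j ω * a ^ j| : ℤ) : ℝ) ≤ ε} ≤ p ^ k := by
  set J := (Finset.range k).image (n - d * k + d * ·)
  have hJcard : J.card = k := by
    rw [Finset.card_image_of_injective _ fun i j h => by simpa [hd.ne'] using h, Finset.card_range]
  have hJsep : ∀ i ∈ J, ∀ j ∈ J, i < j → i + d ≤ j := by
    simp only [J, Finset.mem_image, Finset.mem_range]
    rintro _ ⟨i, -, rfl⟩ _ ⟨j, -, rfl⟩ hij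
    have := Nat.mul_le_mul_left d (Nat.lt_of_mul_lt_mul_left (Nat.lt_of_add_lt_add_left hij))
    rw [Nat.mul_succ] at this
    omega
  have hJm : ∀ j ∈ J, n - d * k ≤ j := by
    simp only [J, Finset.mem_image]
    rintro _ ⟨i, -, rfl⟩
    exact Nat.le_add_right _ _
  have hJsub : J ⊆ Finset.range (n + 1) := by
    simp only [J, Finset.subset_iff, Finset.mem_image, Finset.mem_range]
    rintro _ ⟨i, hi, rfl⟩
    nlinarith [Nat.sub_add_cancel hkn]
  have hsplit : ∀ ω, ∑ j ∈ Finset.range (n + 1), ξ j ω * a ^ j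
      = ∑ j ∈ J, ξ j ω * a ^ j + ∑ j ∈ Finset.range (n + 1) \ J, ξ j ω * a ^ j :=
    fun ω => (Finset.sum_sdiff hJsub).symm.trans (add_comm _ _)
  simp only [hsplit]
  refine measure_add_mem_le_of_indepFun (S := {z : ℤ | ((|z| : ℤ) : ℝ) ≤ ε})
    (Finset.measurable_sum _ fun j _ => (hmeas j).mul_const _)
    (indepFun_sum_sum hmeas hindep Finset.disjoint_sdiff fun j x => x * a ^ j) fun r => ?_
  rw [← hJcard]
  refine measure_sum_mul_pow_mem_le (S := {z | ((|z + r| : ℤ) : ℝ) ≤ ε}) hindep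
    (fun j _ => hbdd j) (fun j _ => hatom j) ha hM hJsep hJm fun z hz w hw => ?_
  have hzw : ((|z - w| : ℤ) : ℝ) < ((|a| ^ (n - d * k) : ℤ) : ℝ) := by
    have := abs_sub ((z + r : ℤ) : ℝ) ((w + r : ℤ) : ℝ)
    rw [Set.mem_ofPred_eq] at hz hw
    push_cast at hz hw this ⊢
    rw [show (z : ℝ) - w = z + r - (w + r) by ring]
    linarith [hz, hw]
  exact_mod_cast hzw

end Probability

section Estimates

theorem mul_log_two_add_one_le {A n : ℕ} (hA : 1 ≤ A) (hn : 4 * A ^ 2 ≤ n) :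
    A * (Nat.log 2 n + 1) ≤ n := by
  set L := Nat.log 2 n
  have hL : 2 ^ L ≤ n := Nat.pow_log_le_self 2 (by nlinarith)
  have hsqrt : 2 ^ (L / 2) ≤ Nat.sqrt n := by
    rw [Nat.le_sqrt, ← pow_add]
    exact (Nat.pow_le_pow_right two_pos (by omega)).trans hL
  have hL' : L + 1 ≤ 2 * Nat.sqrt n := by
    have : L / 2 < 2 ^ (L / 2) := Nat.lt_two_pow_self
    omega
  have hA' : 2 * A ≤ Nat.sqrt n := by
    rw [Nat.le_sqrt]
    nlinarith
  calc A * (L + 1) ≤ A * (2 * Nat.sqrt n) := Nat.mul_le_mul_left A hL'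
    _ = 2 * A * Nat.sqrt n := by ring
    _ ≤ Nat.sqrt n * Nat.sqrt n := Nat.mul_le_mul_right _ hA'
    _ ≤ n := Nat.sqrt_le n

theorem two_mul_two_pow_mul_log_lt {n : ℕ} (hn : 2 ≤ n) (A : ℕ) :
    2 * 2 ^ (A * (Nat.log 2 n + 1)) < n ^ (2 * A + 2) :=
  have hL : 2 ^ Nat.log 2 n ≤ n := Nat.pow_log_le_self 2 (by omega)
  calc 2 * 2 ^ (A * (Nat.log 2 n + 1)) = 2 * ((2 ^ Nat.log 2 n) ^ A * 2 ^ A) := by ring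
    _ ≤ n * (n ^ A * n ^ A) := by gcongr
    _ = n ^ (2 * A + 1) := by ring
    _ < n ^ (2 * A + 2) := Nat.pow_lt_pow_right hn (by omega)

theorem two_mul_rpow_neg_mul_two_pow_lt {n e C : ℕ} (he : e ≤ n) (h : 2 * 2 ^ e < n ^ C) :
    2 * ((n : ℝ) ^ (-(C : ℝ)) * 2 ^ n) < 2 ^ (n - e) := by
  have hC : (2 : ℝ) * 2 ^ e < (n : ℝ) ^ C := by exact_mod_cast h
  have hpos : (0 : ℝ) < (n : ℝ) ^ C := lt_trans (by positivity) hC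
  have hsplit : (2 : ℝ) ^ n = 2 ^ (n - e) * 2 ^ e := by rw [← pow_add, Nat.sub_add_cancel he]
  rw [Real.rpow_neg (Nat.cast_nonneg n), Real.rpow_natCast, hsplit]
  calc 2 * (((n : ℝ) ^ C)⁻¹ * (2 ^ (n - e) * 2 ^ e)) = 2 ^ (n - e) * (2 * 2 ^ e / (n : ℝ) ^ C) := by
        ring
    _ < 2 ^ (n - e) * 1 := by gcongr; exact (div_lt_one hpos).mpr hC
    _ = 2 ^ (n - e) := mul_one _

theorem inv_two_pow_ceil_mul_log_le {n : ℕ} (hn : 1 ≤ n) (B : ℝ) :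
    ((2 : ℝ) ^ (⌈B⌉₊ * (Nat.log 2 n + 1)))⁻¹ ≤ (n : ℝ) ^ (-B) := by
  have hn' : (1 : ℝ) ≤ n := by exact_mod_cast hn
  rw [Real.rpow_neg (by positivity)]
  refine inv_anti₀ (by positivity) ?_
  calc (n : ℝ) ^ B ≤ (n : ℝ) ^ (⌈B⌉₊ : ℝ) := Real.rpow_le_rpow_of_exponent_le hn' (Nat.le_ceil B)
    _ = (n : ℝ) ^ ⌈B⌉₊ := Real.rpow_natCast _ _
    _ ≤ ((2 : ℝ) ^ (Nat.log 2 n + 1)) ^ ⌈B⌉₊ := by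
        gcongr
        exact_mod_cast (Nat.lt_pow_succ_log_self one_lt_two n).le
    _ = 2 ^ (⌈B⌉₊ * (Nat.log 2 n + 1)) := by ring

theorem le_rpow_mul_rpow_neg_of_le {x B : ℝ} {n N : ℕ} (hx : x ≤ 1) (hB : 0 ≤ B) (hn : 1 ≤ n)
    (hN : 1 ≤ N) (h : N ≤ n → x ≤ (n : ℝ) ^ (-B)) : x ≤ (N : ℝ) ^ B * (n : ℝ) ^ (-B) := by
  have hn' : (0 : ℝ) < n := by exact_mod_cast hn
  rcases le_or_gt N n with hNn | hNn
  · exact (h hNn).trans (le_mul_of_one_le_left (by positivity)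
      (Real.one_le_rpow (by exact_mod_cast hN) hB))
  · calc x ≤ (n : ℝ) ^ B * (n : ℝ) ^ (-B) := by
          rwa [← Real.rpow_add hn', add_neg_cancel, Real.rpow_zero]
      _ ≤ (N : ℝ) ^ B * (n : ℝ) ^ (-B) := by gcongr

end Estimates

theorem stmt19_general {Ω : Type*} [MeasureSpace Ω] [IsProbabilityMeasure (ℙ : Measure Ω)]
    (M : ℕ) (ξ : ℕ → Ω → ℤ)
    (hmeas : ∀ i, Measurable (ξ i))
    (hindep : iIndepFun ξ ℙ)
    (hident : ∀ i, Measure.map (ξ i) ℙ = Measure.map (ξ 0) ℙ)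
    (hbdd : ∀ i, ∀ᵐ ω ∂ℙ, |ξ i ω| ≤ (M : ℤ))
    (hatom : ∀ x : ℤ, ℙ {ω | ξ 0 ω = x} ≤ 1/2) :
    ∀ B : ℝ, 0 < B → ∃ C K : ℝ, 0 < C ∧ 0 < K ∧
      ∀ n : ℕ, 1 ≤ n → ∀ a : ℤ, (a = 2 ∨ a = -2) →
        (ℙ {ω | ((|∑ j ∈ Finset.range (n+1), ξ j ω * a ^ j| : ℤ) : ℝ)
            ≤ (n : ℝ) ^ (-C) * 2 ^ n}).toReal
          ≤ K * (n : ℝ) ^ (-B) := by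
  intro B hB
  set b := ⌈B⌉₊
  set d := M + 1
  have hA : 1 ≤ d * b := Nat.one_le_iff_ne_zero.mpr (by positivity)
  have hatom' : ∀ j x, ℙ (ξ j ⁻¹' {x}) ≤ 1 / 2 := fun j x => by
    rw [← Measure.map_apply (hmeas j) (measurableSet_singleton x), hident,
      Measure.map_apply (hmeas 0) (measurableSet_singleton x)]
    exact hatom x
  refine ⟨(2 * (d * b) + 2 : ℕ), ((4 * (d * b) ^ 2 : ℕ) : ℝ) ^ B, by positivity, by positivity,
    fun n hn a ha => le_rpow_mul_rpow_neg_of_le measureReal_le_one hB.le hn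
      (by nlinarith) fun hN => ?_⟩
  have habs : |a| = 2 := by rcases ha with rfl | rfl <;> norm_num
  have hM : 2 * (M : ℤ) < |a| ^ d := by
    have : (M : ℤ) < 2 ^ M := by exact_mod_cast Nat.lt_two_pow_self
    rw [habs, pow_succ]
    linarith
  have hkn : d * (b * (Nat.log 2 n + 1)) ≤ n := by
    rw [← mul_assoc]
    exact mul_log_two_add_one_le hA hN
  have hε := two_mul_rpow_neg_mul_two_pow_lt hkn
    (by rw [← mul_assoc]; exact two_mul_two_pow_mul_log_lt (by nlinarith) (d * b))
  calc _ ≤ ((1 / 2 : ℝ≥0∞) ^ (b * (Nat.log 2 n + 1))).toReal :=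
        ENNReal.toReal_mono (by simp) <| measure_abs_sum_range_mul_pow_le hmeas hindep hbdd hatom'
          (by rintro rfl; simp at habs) M.succ_pos hM hkn (by rwa [← Int.cast_abs, habs])
    _ = ((2 : ℝ) ^ (b * (Nat.log 2 n + 1)))⁻¹ := by simp
    _ ≤ (n : ℝ) ^ (-B) := inv_two_pow_ceil_mul_log_le hn B

/-- For i.i.d. bounded integer coefficients with atoms ≤ 1/2, for every B > 0 there is
C > 0 with P(|P(±2)| ≤ n^{-C} 2^n) = O(n^{-B}). -/
theorem stmt19 {Ω : Type*} [MeasureSpace Ω] [IsProbabilityMeasure (ℙ : Measure Ω)]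
    (M : ℕ) (hM : 1 ≤ M) (ξ : ℕ → Ω → ℤ)
    (hmeas : ∀ i, Measurable (ξ i))
    (hindep : iIndepFun ξ ℙ)
    (hident : ∀ i, Measure.map (ξ i) ℙ = Measure.map (ξ 0) ℙ)
    (hbdd : ∀ i, ∀ᵐ ω ∂ℙ, |ξ i ω| ≤ (M : ℤ))
    (hatom : ∀ x : ℤ, ℙ {ω | ξ 0 ω = x} ≤ 1/2) :
    ∀ B : ℝ, 0 < B → ∃ C K : ℝ, 0 < C ∧ 0 < K ∧
      ∀ n : ℕ, 1 ≤ n → ∀ a : ℤ, (a = 2 ∨ a = -2) →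
        (ℙ {ω | ((|∑ j ∈ Finset.range (n+1), ξ j ω * a ^ j| : ℤ) : ℝ)
            ≤ (n : ℝ) ^ (-C) * 2 ^ n}).toReal
          ≤ K * (n : ℝ) ^ (-B) :=
  stmt19_general M ξ hmeas hindep hident hbdd hatom
end
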